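/- arXiv:2206.10279 — 8 statements merged into one kernel-verified Lean document; each statement's English description precedes it below -/
import Mathlib

section
/- Let T be a thread of length l and width a (a closed subset of [0,l] containing 0 and l with metric d(x,y)=min{|x-y|, x+(l-y)+a, y+(l-x)+a}). Let M be a metric space and K ≥ 0. A function F : T → M is K-Lipschitz (with respect to the thread metric on T) if and only if d(F(0), F(l)) ≤ K·a and d(F(x), F(y)) ≤ K·|x−y| for all x, y ∈ T. -/
open Set

/-- The thread metric of length `l` and width `a`. -/
noncomputable def threadDist (l a x y : ℝ) : ℝ :=
  min |x - y| (min (x + (l - y) + a) (y + (l - x) + a))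

/-- `T` is (the underlying set of) an ℝ-thread of length `l`:
a closed subset of `[0, l]` containing `0` and `l`. -/
def IsThread (T : Set ℝ) (l : ℝ) : Prop :=
  IsClosed T ∧ T ⊆ Set.Icc 0 l ∧ (0 : ℝ) ∈ T ∧ l ∈ T

/-- `(x, y)` is a gap of `T`: a nonempty open interval with endpoints in `T`
and disjoint from `T`. -/
def IsGap (T : Set ℝ) (x y : ℝ) : Prop :=
  x ∈ T ∧ y ∈ T ∧ x < y ∧ Set.Ioo x y ∩ T = ∅

/-- `F : T → M` is `K`-Lipschitz for the thread metric iff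
`d(F 0, F l) ≤ K a` and `d(F x, F y) ≤ K |x - y|` for all `x, y ∈ T`. -/
theorem lipschitz_thread_iff {M : Type*} [MetricSpace M]
    (l a : ℝ) (ha : 0 < a) (hal : a ≤ l)
    (T : Set ℝ) (hT : IsThread T l) (K : ℝ) (hK : 0 ≤ K) (F : ℝ → M) :
    (∀ x ∈ T, ∀ y ∈ T, dist (F x) (F y) ≤ K * threadDist l a x y) ↔
      (dist (F 0) (F l) ≤ K * a ∧
        ∀ x ∈ T, ∀ y ∈ T, dist (F x) (F y) ≤ K * |x - y|) := by
  obtain ⟨-, hsub, h0T, hlT⟩ := hT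
  constructor
  · intro h
    constructor
    · have h0 := h 0 h0T l hlT
      have : threadDist l a 0 l = a := by
        unfold threadDist
        have hl0 : 0 ≤ l := ha.le.trans hal
        rw [abs_sub_comm, abs_of_nonneg (by linarith)]
        have : min (0 + (l - l) + a) (l + (l - 0) + a) = a := by
          rw [min_eq_left (by linarith)]; ring
        rw [this, sub_zero, min_eq_right hal]
      rwa [this] at h0
    · intro x hx y hy
      exact (h x hx y hy).trans
        (mul_le_mul_of_nonneg_left (min_le_left _ _) hK)
  · rintro ⟨h0l, hlip⟩ x hx y hy
    obtain ⟨hx0, hxl⟩ := hsub hx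
    obtain ⟨hy0, hyl⟩ := hsub hy
    have h1 : dist (F x) (F y) ≤ K * |x - y| := hlip x hx y hy
    have h2 : dist (F x) (F y) ≤ K * (x + (l - y) + a) := by
      calc dist (F x) (F y)
          ≤ dist (F x) (F 0) + dist (F 0) (F l) + dist (F l) (F y) :=
            dist_triangle4 _ _ _ _
        _ ≤ K * |x - 0| + K * a + K * |l - y| := by
            gcongr
            · exact hlip x hx 0 h0T
            · exact hlip l hlT y hy
        _ = K * (x + (l - y) + a) := by
            rw [abs_of_nonneg (by linarith), abs_of_nonneg (by linarith)]; ring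
    have h3 : dist (F x) (F y) ≤ K * (y + (l - x) + a) := by
      calc dist (F x) (F y)
          ≤ dist (F x) (F l) + dist (F l) (F 0) + dist (F 0) (F y) :=
            dist_triangle4 _ _ _ _
        _ ≤ K * |x - l| + K * a + K * |0 - y| := by
            gcongr
            · exact hlip x hx l hlT
            · rw [dist_comm]; exact h0l
            · exact hlip 0 h0T y hy
        _ = K * (y + (l - x) + a) := by
            rw [abs_of_nonpos (by linarith), abs_of_nonpos (by linarith)]; ring
    unfold threadDist
    rcases min_cases |x - y| (min (x + (l - y) + a) (y + (l - x) + a)) with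
      ⟨heq, -⟩ | ⟨heq, -⟩ <;> rw [heq]
    · exact h1
    · rcases min_cases (x + (l - y) + a) (y + (l - x) + a) with ⟨heq2, -⟩ | ⟨heq2, -⟩ <;>
        rw [heq2] <;> assumption
end

section
/- Let T and S be threads of lengths l_T, l_S and widths a_T, a_S respectively, let K ≥ 1, and suppose every gap of T has length strictly less than a_S/K. Then every K-Lipschitz function F : T → S satisfies |F(q) − F(p)| ≤ K·|q − p| for all p, q ∈ T (where |·| denotes the Euclidean distance of the underlying real points). -/
open Set

/-- if every gap of `T` is shorter than `a_S / K`, then every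
`K`-Lipschitz `F : T → S` satisfies `|F q - F p| ≤ K |q - p|`. -/
theorem lipschitz_euclidean_of_small_gaps
    (lT aT lS aS : ℝ) (haT : 0 < aT) (haTl : aT ≤ lT) (haS : 0 < aS) (haSl : aS ≤ lS)
    (T S : Set ℝ) (hT : IsThread T lT) (hS : IsThread S lS)
    (K : ℝ) (hK : 1 ≤ K)
    (hgaps : ∀ x y, IsGap T x y → y - x < aS / K)
    (F : ℝ → ℝ) (hFmap : Set.MapsTo F T S)
    (hFlip : ∀ x ∈ T, ∀ y ∈ T, threadDist lS aS (F x) (F y) ≤ K * threadDist lT aT x y) :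
    ∀ p ∈ T, ∀ q ∈ T, |F q - F p| ≤ K * |q - p| := by
  have hK0 : (0:ℝ) < K := lt_of_lt_of_le one_pos hK
  obtain ⟨hTc, hTsub, hT0, hTl⟩ := hT
  obtain ⟨hSc, hSsub, hS0, hSl⟩ := hS
  have haSK : 0 < aS / K := by positivity
  -- Key local lemma: within distance aS/K (scaled), F is Euclidean K-Lipschitz.
  have key : ∀ x ∈ T, ∀ y ∈ T, K * |x - y| < aS → |F x - F y| ≤ K * |x - y| := by
    intro x hx y hy hlt
    have hx' := hSsub (hFmap hx)
    have hy' := hSsub (hFmap hy)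
    have h1 : threadDist lT aT x y ≤ |x - y| := min_le_left _ _
    have h2 : min |F x - F y| aS ≤ threadDist lS aS (F x) (F y) := by
      unfold threadDist
      refine le_min (min_le_left _ _) (le_min ?_ ?_)
      · have := hx'.1; have := hy'.2
        calc min |F x - F y| aS ≤ aS := min_le_right _ _
          _ ≤ F x + (lS - F y) + aS := by linarith
      · have := hy'.1; have := hx'.2
        calc min |F x - F y| aS ≤ aS := min_le_right _ _
          _ ≤ F y + (lS - F x) + aS := by linarith
    have h3 := hFlip x hx y hy
    have h4 : min |F x - F y| aS ≤ K * |x - y| :=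
      le_trans h2 (le_trans h3 (mul_le_mul_of_nonneg_left h1 hK0.le))
    rcases min_le_iff.mp h4 with h | h
    · exact h
    · linarith
  -- Main one-sided lemma
  have main : ∀ p ∈ T, ∀ q ∈ T, p ≤ q → |F q - F p| ≤ K * (q - p) := by
    intro p hp q hq hpq
    set A := {t : ℝ | t ∈ T ∧ t ∈ Icc p q ∧ |F t - F p| ≤ K * (t - p)} with hA
    have hpA : p ∈ A := ⟨hp, ⟨le_refl p, hpq⟩, by simp⟩
    have hAne : A.Nonempty := ⟨p, hpA⟩
    have hAbdd : BddAbove A := ⟨q, fun t ht => ht.2.1.2⟩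
    set s := sSup A with hs
    have hsub : A ⊆ T ∩ Icc p q := fun t ht => ⟨ht.1, ht.2.1⟩
    have hsmem : s ∈ T ∩ Icc p q :=
      closure_minimal hsub (hTc.inter isClosed_Icc) (csSup_mem_closure hAne hAbdd)
    have hsT := hsmem.1
    have hsIcc := hsmem.2
    have hsA : s ∈ A := by
      have hε : 0 < aS / (2*K) := by positivity
      obtain ⟨t, htA, htlt⟩ := exists_lt_of_lt_csSup hAne
        (show s - aS/(2*K) < s by linarith)
      have hts : t ≤ s := le_csSup hAbdd htA
      have hst : K * |s - t| < aS := by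
        rw [abs_of_nonneg (by linarith)]
        have h1 : s - t < aS / (2*K) := by linarith
        have h2 : K * (s - t) < K * (aS / (2*K)) :=
          mul_lt_mul_of_pos_left h1 hK0
        have h3 : K * (aS / (2*K)) = aS / 2 := by field_simp
        linarith
      have h1 := key s hsT t htA.1 hst
      rw [abs_of_nonneg (by linarith : (0:ℝ) ≤ s - t)] at h1
      refine ⟨hsT, hsIcc, ?_⟩
      have h2 := htA.2.2
      have h3 := abs_sub_le (F s) (F t) (F p)
      linarith
    have hsq : s = q := by
      rcases eq_or_lt_of_le hsIcc.2 with h | h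
      · exact h
      exfalso
      by_cases hcase : ∃ t, t ∈ T ∩ Ioc s q ∧ t - s < aS / K
      · obtain ⟨t, ⟨htT, hts, htq⟩, hlt⟩ := hcase
        have hK1 : K * |s - t| < aS := by
          rw [abs_of_nonpos (by linarith), neg_sub]
          have h2 : K * (t - s) < K * (aS / K) := mul_lt_mul_of_pos_left hlt hK0
          have h3 : K * (aS / K) = aS := by field_simp
          linarith
        have h1 := key s hsT t htT hK1
        rw [abs_of_nonpos (by linarith : s - t ≤ 0), neg_sub,
          abs_sub_comm] at h1
        have htA : t ∈ A := by
          refine ⟨htT, ⟨le_trans hsIcc.1 hts.le, htq⟩, ?_⟩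
          have h2 := hsA.2.2
          have h3 := abs_sub_le (F t) (F s) (F p)
          linarith
        have := le_csSup hAbdd htA
        linarith
      · push_neg at hcase
        set B := T ∩ Ioc s q with hB
        have hqB : q ∈ B := ⟨hq, h, le_refl q⟩
        have hBne : B.Nonempty := ⟨q, hqB⟩
        have hBbdd : BddBelow B := ⟨s, fun t ht => ht.2.1.le⟩
        set y := sInf B with hy
        have hBsub : B ⊆ T ∩ Icc (s + aS/K) q := fun t ht =>
          ⟨ht.1, ⟨by have := hcase t ht; linarith, ht.2.2⟩⟩
        have hymem : y ∈ T ∩ Icc (s + aS/K) q :=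
          closure_minimal hBsub (hTc.inter isClosed_Icc) (csInf_mem_closure hBne hBbdd)
        have hgap : IsGap T s y := by
          refine ⟨hsT, hymem.1, by linarith [hymem.2.1], ?_⟩
          ext t
          simp only [mem_inter_iff, mem_Ioo, mem_empty_iff_false, iff_false, not_and]
          rintro ⟨h1, h2⟩ h3
          have htB : t ∈ B := ⟨h3, h1, by linarith [hymem.2.2]⟩
          have := csInf_le hBbdd htB
          linarith
        have := hgaps s y hgap
        linarith [hymem.2.1]
    have := hsA.2.2
    rw [hsq] at this
    exact this
  intro p hp q hq
  rcases le_total p q with h | h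
  · rw [abs_of_nonneg (by linarith : (0:ℝ) ≤ q - p)]
    exact main p hp q hq h
  · rw [abs_sub_comm q p, abs_of_nonneg (by linarith : (0:ℝ) ≤ p - q),
      abs_sub_comm (F q) (F p)]
    exact main q hq p hp h
end

section
/- Let T and S be threads of lengths l_T, l_S, and let F : T → S be a K-Lipschitz map with F(0) = 0 and F(l_T) = l_S. Then there exists a non-decreasing Lipschitz function G : T → S with Lipschitz constant at most K such that G(0) = 0 and G(l_T) = l_S. -/
open Set

namespace ThreadAux

lemma wrap_eq (l a x y : ℝ) :
    min (x + (l - y) + a) (y + (l - x) + a) = l + a - |x - y| := by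
  rcases le_total x y with h | h
  · rw [abs_of_nonpos (by linarith : x - y ≤ 0), min_eq_left (by linarith)]; ring
  · rw [abs_of_nonneg (by linarith : (0:ℝ) ≤ x - y), min_eq_right (by linarith)]; ring

lemma td_eq (l a x y : ℝ) :
    threadDist l a x y = min |x - y| (l + a - |x - y|) := by
  unfold threadDist; rw [wrap_eq]

lemma td_comm (l a x y : ℝ) : threadDist l a x y = threadDist l a y x := by
  rw [td_eq, td_eq, abs_sub_comm]

lemma td_le_abs (l a x y : ℝ) : threadDist l a x y ≤ |x - y| := min_le_left _ _

lemma td_le_wrap (l a x y : ℝ) : threadDist l a x y ≤ x + (l - y) + a :=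
  le_trans (min_le_right _ _) (min_le_left _ _)

lemma td_nonneg {l a x y : ℝ} (ha : 0 ≤ a) (hx : x ∈ Icc 0 l) (hy : y ∈ Icc 0 l) :
    0 ≤ threadDist l a x y := by
  rw [td_eq]
  have h1 : |x - y| ≤ l := abs_le.mpr
    ⟨by linarith [hx.1, hx.2, hy.1, hy.2], by linarith [hx.1, hx.2, hy.1, hy.2]⟩
  exact le_min (abs_nonneg _) (by linarith)

lemma td_ends {l a : ℝ} (ha : 0 < a) (hal : a ≤ l) : threadDist l a 0 l = a := by
  rw [td_eq]
  have h1 : |(0:ℝ) - l| = l := by rw [abs_of_nonpos (by linarith)]; ring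
  have h2 : l + a - l = a := by ring
  rw [h1, h2, min_eq_right hal]

lemma td_small {l a x y : ℝ} (hx : x ∈ Icc 0 l) (hy : y ∈ Icc 0 l)
    (h : threadDist l a x y < a) : |x - y| = threadDist l a x y := by
  rw [td_eq] at h ⊢
  have h1 : |x - y| ≤ l := abs_le.mpr
    ⟨by linarith [hx.1, hx.2, hy.1, hy.2], by linarith [hx.1, hx.2, hy.1, hy.2]⟩
  rcases min_cases |x - y| (l + a - |x - y|) with ⟨h2, _⟩ | ⟨h2, _⟩
  · rw [h2]
  · exfalso; rw [h2] at h; linarith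

lemma abs_sub_round_int (x : ℝ) (j : ℤ) : |x - round x| ≤ |x - j| := by
  rcases eq_or_ne (round x) j with h | h
  · rw [← h]
  · have h2 : (1:ℤ) ≤ |round x - j| := Int.one_le_abs (sub_ne_zero.mpr h)
    have h1 : (1:ℝ) ≤ |(round x : ℝ) - (j:ℝ)| := by
      calc (1:ℝ) = ((1:ℤ):ℝ) := by norm_num
      _ ≤ ((|round x - j| : ℤ):ℝ) := by exact_mod_cast h2
      _ = |((round x : ℤ):ℝ) - (j:ℝ)| := by rw [Int.cast_abs, Int.cast_sub]
    have h3 := abs_sub_round x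
    have h4 : |(round x:ℝ) - (j:ℝ)| ≤ |(round x:ℝ) - x| + |x - (j:ℝ)| := abs_sub_le _ _ _
    have h5 : |(round x:ℝ) - x| = |x - round x| := abs_sub_comm _ _
    linarith

lemma abs_sub_round_mul {L : ℝ} (hL : 0 < L) (θ : ℝ) (j : ℤ) :
    |θ - L * round (θ / L)| ≤ |θ - L * j| := by
  have h := abs_sub_round_int (θ / L) j
  have e1 : θ - L * round (θ / L) = L * (θ / L - round (θ / L)) := by
    field_simp
  have e2 : θ - L * j = L * (θ / L - j) := by field_simp
  rw [e1, e2, abs_mul, abs_mul, abs_of_pos hL]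
  exact mul_le_mul_of_nonneg_left h hL.le

lemma round_rep_le {L θ : ℝ} (hL : 0 < L) (hθ : |θ| ≤ L) :
    |θ - L * round (θ / L)| ≤ min |θ| (L - |θ|) := by
  refine le_min ?_ ?_
  · simpa using abs_sub_round_mul hL θ 0
  · rcases le_total 0 θ with h | h
    · have h1 := abs_sub_round_mul hL θ 1
      have h2 : |θ - L * ((1:ℤ):ℝ)| = L - |θ| := by
        rw [abs_of_nonneg h] at hθ ⊢
        rw [abs_of_nonpos (by push_cast; linarith)]
        push_cast; ring
      rw [h2] at h1; exact h1
    · have h1 := abs_sub_round_mul hL θ (-1)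
      have h2 : |θ - L * ((-1:ℤ):ℝ)| = L - |θ| := by
        rw [abs_of_nonpos h] at hθ ⊢
        rw [abs_of_nonneg (by push_cast; linarith)]
        push_cast; ring
      rw [h2] at h1; exact h1

lemma le_K_td {K l a x y u : ℝ} (hK : 0 ≤ K) (hxy : x ≤ y)
    (h1 : u ≤ K * (y - x)) (h2 : u ≤ K * (x + (l - y) + a)) :
    u ≤ K * threadDist l a x y := by
  unfold threadDist
  have habs : |x - y| = y - x := by rw [abs_of_nonpos (by linarith)]; ring
  rcases le_total |x - y| (min (x + (l - y) + a) (y + (l - x) + a)) with h | h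
  · rw [min_eq_left h, habs]; exact h1
  · rw [min_eq_right h]
    rcases le_total (x + (l - y) + a) (y + (l - x) + a) with h' | h'
    · rw [min_eq_left h']; exact h2
    · rw [min_eq_right h']
      exact le_trans h2 (mul_le_mul_of_nonneg_left (by linarith) hK)

lemma gap_right_unique {T : Set ℝ} {p p' q : ℝ} (h : IsGap T p q) (h' : IsGap T p' q) :
    p = p' := by
  by_contra hne
  rcases lt_or_gt_of_ne hne with hlt | hlt
  · have hmem : p' ∈ Set.Ioo p q ∩ T := ⟨⟨hlt, h'.2.2.1⟩, h'.1⟩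
    rw [h.2.2.2] at hmem; simp at hmem
  · have hmem : p ∈ Set.Ioo p' q ∩ T := ⟨⟨hlt, h.2.2.1⟩, h.1⟩
    rw [h'.2.2.2] at hmem; simp at hmem

lemma gap_left_unique {T : Set ℝ} {p q q' : ℝ} (h : IsGap T p q) (h' : IsGap T p q') :
    q = q' := by
  by_contra hne
  rcases lt_or_gt_of_ne hne with hlt | hlt
  · have hmem : q ∈ Set.Ioo p q' ∩ T := ⟨⟨h.2.2.1, hlt⟩, h.2.1⟩
    rw [h'.2.2.2] at hmem; simp at hmem
  · have hmem : q' ∈ Set.Ioo p q ∩ T := ⟨⟨h'.2.2.1, hlt⟩, h'.2.1⟩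
    rw [h.2.2.2] at hmem; simp at hmem

lemma longGaps_finite {T : Set ℝ} {l r : ℝ} (hsub : T ⊆ Icc 0 l) (hr : 0 < r) :
    {pq : ℝ × ℝ | IsGap T pq.1 pq.2 ∧ r ≤ pq.2 - pq.1}.Finite := by
  have key : ∀ a b c d : ℝ, IsGap T a b → IsGap T c d → r ≤ b - a → a < c →
      ⌊a/r⌋ < ⌊c/r⌋ := by
    intro a b c d hab hcd hrab hac
    have hbc : b ≤ c := by
      by_contra hbc; push_neg at hbc
      have hmem : c ∈ Set.Ioo a b ∩ T := ⟨⟨hac, hbc⟩, hcd.1⟩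
      rw [hab.2.2.2] at hmem; simp at hmem
    have h0 : (1:ℝ) ≤ (c - a) / r := (one_le_div hr).mpr (by linarith)
    have h1 : a / r + 1 ≤ c / r := by
      rw [sub_div] at h0; linarith
    have h2 : ⌊a/r⌋ + 1 ≤ ⌊c/r⌋ := by
      have h3 := Int.floor_le_floor h1
      rwa [Int.floor_add_one] at h3
    omega
  apply Set.Finite.of_finite_image (f := fun pq : ℝ × ℝ => ⌊pq.1 / r⌋)
  · apply Set.Finite.subset (Set.finite_Icc (0:ℤ) ⌊l / r⌋)
    rintro j ⟨⟨p, q⟩, ⟨hgap, hlen⟩, rfl⟩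
    have hp0 : 0 ≤ p := (hsub hgap.1).1
    have hpl : p ≤ l := (hsub hgap.1).2
    constructor
    · exact Int.floor_nonneg.mpr (div_nonneg hp0 hr.le)
    · exact Int.floor_le_floor (div_le_div_of_nonneg_right hpl hr.le)
  · rintro ⟨p, q⟩ ⟨hgap, hlen⟩ ⟨p', q'⟩ ⟨hgap', hlen'⟩ heq
    simp only at heq hgap hlen hgap' hlen'
    rcases lt_trichotomy p p' with h | h | h
    · exact absurd heq (ne_of_lt (key p q p' q' hgap hgap' hlen h))
    · subst h
      exact congrArg (Prod.mk p) (gap_left_unique hgap hgap')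
    · exact absurd heq (ne_of_gt (key p' q' p q hgap' hgap hlen' h))

noncomputable def NN (Φ : Finset (ℝ × ℝ)) (F : ℝ → ℝ) (L t : ℝ) : ℤ :=
  -∑ pq ∈ Φ.filter (fun pq => pq.2 ≤ t), round ((F pq.2 - F pq.1) / L)

lemma NN_congr {Φ : Finset (ℝ × ℝ)} {F : ℝ → ℝ} {L x y : ℝ}
    (h : ∀ pq ∈ Φ, (pq.2 ≤ x ↔ pq.2 ≤ y)) : NN Φ F L x = NN Φ F L y := by
  have h2 : Φ.filter (fun pq => pq.2 ≤ x) = Φ.filter (fun pq => pq.2 ≤ y) :=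
    Finset.filter_congr h
  rw [NN, NN, h2]

lemma NN_gap {Φ : Finset (ℝ × ℝ)} {F : ℝ → ℝ} {L p q : ℝ}
    (hmem : (p, q) ∈ Φ) (hpq : p < q)
    (huniq : ∀ pq ∈ Φ, pq.2 ≤ q → pq.2 ≤ p ∨ pq = (p, q)) :
    NN Φ F L q = NN Φ F L p - round ((F q - F p) / L) := by
  classical
  have hins : Φ.filter (fun pq => pq.2 ≤ q)
      = insert (p, q) (Φ.filter (fun pq => pq.2 ≤ p)) := by
    ext pq
    simp only [Finset.mem_filter, Finset.mem_insert]
    constructor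
    · rintro ⟨h1, h2⟩
      rcases huniq pq h1 h2 with h | h
      · exact Or.inr ⟨h1, h⟩
      · exact Or.inl h
    · rintro (rfl | ⟨h1, h2⟩)
      · exact ⟨hmem, le_refl _⟩
      · exact ⟨h1, le_trans h2 hpq.le⟩
  rw [NN, NN, hins, Finset.sum_insert (by simp [not_le.mpr hpq])]
  ring

end ThreadAux

/-- a `K`-Lipschitz map between threads fixing the extremes can be
replaced by a non-decreasing one with Lipschitz constant at most `K`. -/
theorem exists_monotone_lipschitz
    (lT aT lS aS : ℝ) (haT : 0 < aT) (haTl : aT ≤ lT) (haS : 0 < aS) (haSl : aS ≤ lS)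
    (T S : Set ℝ) (hT : IsThread T lT) (hS : IsThread S lS)
    (K : ℝ) (F : ℝ → ℝ) (hFmap : Set.MapsTo F T S)
    (hFlip : ∀ x ∈ T, ∀ y ∈ T, threadDist lS aS (F x) (F y) ≤ K * threadDist lT aT x y)
    (hF0 : F 0 = 0) (hFl : F lT = lS) :
    ∃ G : ℝ → ℝ, Set.MapsTo G T S ∧
      (∀ x ∈ T, ∀ y ∈ T, x ≤ y → G x ≤ G y) ∧
      (∀ x ∈ T, ∀ y ∈ T, threadDist lS aS (G x) (G y) ≤ K * threadDist lT aT x y) ∧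
      G 0 = 0 ∧ G lT = lS := by
  classical
  obtain ⟨hTc, hTsub, hT0, hTl⟩ := hT
  obtain ⟨hSc, hSsub, hS0, hSl⟩ := hS
  have hlS0 : (0:ℝ) ≤ lS := le_trans haS.le haSl
  have hlT0 : (0:ℝ) ≤ lT := le_trans haT.le haTl
  have hKaT : aS ≤ K * aT := by
    have h := hFlip 0 hT0 lT hTl
    rwa [hF0, hFl, ThreadAux.td_ends haS haSl, ThreadAux.td_ends haT haTl] at h
  have hK : 0 < K := by nlinarith
  set L : ℝ := lS + aS with hLdef
  have hLpos : 0 < L := by simp only [hLdef]; linarith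
  have hlSL : lS < L := by simp only [hLdef]; linarith
  set r : ℝ := aS / K with hrdef
  have hrpos : 0 < r := div_pos haS hK
  have hKr : K * r = aS := by
    rw [hrdef, mul_comm, div_mul_cancel₀ _ (ne_of_gt hK)]
  have hF01 : ∀ t ∈ T, F t ∈ Icc 0 lS := fun t ht => hSsub (hFmap ht)
  have hFd : ∀ x ∈ T, ∀ y ∈ T, threadDist lS aS (F x) (F y) ≤ K * |x - y| :=
    fun x hx y hy => le_trans (hFlip x hx y hy)
      (mul_le_mul_of_nonneg_left (ThreadAux.td_le_abs _ _ _ _) hK.le)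
  -- the finite set of long gaps
  have hfin : {pq : ℝ × ℝ | IsGap T pq.1 pq.2 ∧ r ≤ pq.2 - pq.1}.Finite :=
    ThreadAux.longGaps_finite hTsub hrpos (l := lT)
  set Φ : Finset (ℝ × ℝ) := hfin.toFinset with hΦdef
  have hΦ : ∀ pq : ℝ × ℝ, pq ∈ Φ ↔ IsGap T pq.1 pq.2 ∧ r ≤ pq.2 - pq.1 := by
    intro pq; rw [hΦdef, Set.Finite.mem_toFinset]; rfl
  set g : ℝ → ℝ := fun t => F t + L * ((ThreadAux.NN Φ F L t : ℤ) : ℝ) with hgdef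
  have hgval : ∀ t : ℝ, g t = F t + L * ((ThreadAux.NN Φ F L t : ℤ) : ℝ) := fun t => rfl
  -- crossing any gap is controlled
  have hgap : ∀ p q : ℝ, IsGap T p q → |g q - g p| ≤ K * (q - p) := by
    intro p q hgapq
    have hpT := hgapq.1
    have hqT := hgapq.2.1
    have hpq := hgapq.2.2.1
    have habspq : |p - q| = q - p := by rw [abs_of_nonpos (by linarith)]; ring
    have hdle : threadDist lS aS (F p) (F q) ≤ K * (q - p) := by
      have h := hFd p hpT q hqT
      rwa [habspq] at h
    rcases lt_or_ge (q - p) r with hshort | hlong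
    · -- short gap : no change of NN, euclidean estimate
      have hNeq : ThreadAux.NN Φ F L p = ThreadAux.NN Φ F L q := by
        apply ThreadAux.NN_congr
        intro pq hpqΦ
        obtain ⟨hg', hl'⟩ := (hΦ pq).mp hpqΦ
        constructor
        · intro h; exact le_trans h hpq.le
        · intro h
          by_contra hnot; push_neg at hnot
          have h2T : pq.2 ∈ T := hg'.2.1
          rcases lt_or_eq_of_le h with hlt | heq
          · have hmem : pq.2 ∈ Set.Ioo p q ∩ T := ⟨⟨hnot, hlt⟩, h2T⟩
            rw [hgapq.2.2.2] at hmem; simp at hmem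
          · have hp1 : pq.1 = p := by
              rw [heq] at hg'
              exact ThreadAux.gap_right_unique hg' hgapq
            rw [hp1, heq] at hl'; linarith
      have h2 : threadDist lS aS (F p) (F q) < aS :=
        lt_of_le_of_lt hdle (by rw [← hKr]; exact (mul_lt_mul_iff_right₀ hK).mpr hshort)
      have h3 := ThreadAux.td_small (hF01 p hpT) (hF01 q hqT) h2
      have h4 : |g q - g p| = |F q - F p| := by
        rw [hgval, hgval, hNeq]; ring_nf
      rw [h4, abs_sub_comm, h3]
      exact hdle
    · -- long gap
      have hmem : (p, q) ∈ Φ := (hΦ (p, q)).mpr ⟨hgapq, hlong⟩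
      have huniq : ∀ pq ∈ Φ, pq.2 ≤ q → pq.2 ≤ p ∨ pq = (p, q) := by
        intro pq hpqΦ h
        obtain ⟨hg', _⟩ := (hΦ pq).mp hpqΦ
        by_contra hnot; push_neg at hnot
        obtain ⟨hnle, hne⟩ := hnot
        have h2T : pq.2 ∈ T := hg'.2.1
        rcases lt_or_eq_of_le h with hlt | heq
        · have hmem2 : pq.2 ∈ Set.Ioo p q ∩ T := ⟨⟨hnle, hlt⟩, h2T⟩
          rw [hgapq.2.2.2] at hmem2; simp at hmem2
        · have hp1 : pq.1 = p := by
            rw [heq] at hg'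
            exact ThreadAux.gap_right_unique hg' hgapq
          exact hne (Prod.ext hp1 heq)
      have hstep := ThreadAux.NN_gap (F := F) (L := L) hmem hpq huniq
      have h5 : g q - g p = (F q - F p) - L * round ((F q - F p) / L) := by
        rw [hgval, hgval, hstep]; push_cast; ring
      have habsθ : |F q - F p| ≤ L := by
        have h6 := hF01 p hpT; have h7 := hF01 q hqT
        rw [abs_le]
        constructor
        · simp only [hLdef]; linarith [h6.2, h7.1]
        · simp only [hLdef]; linarith [h6.1, h7.2]
      rw [h5]
      refine le_trans (ThreadAux.round_rep_le hLpos habsθ) ?_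
      have h8 : threadDist lS aS (F p) (F q) = min |F q - F p| (L - |F q - F p|) := by
        rw [ThreadAux.td_eq, abs_sub_comm, hLdef]
      rw [← h8]
      exact hdle
  -- local euclidean control
  have hlocal : ∀ x ∈ T, ∀ y ∈ T, x ≤ y → y - x < r → |g y - g x| ≤ K * (y - x) := by
    intro x hx y hy hxy hlt
    have hNeq : ThreadAux.NN Φ F L x = ThreadAux.NN Φ F L y := by
      apply ThreadAux.NN_congr
      intro pq hpqΦ
      obtain ⟨hg', hl'⟩ := (hΦ pq).mp hpqΦ
      constructor
      · intro h; exact le_trans h hxy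
      · intro h
        by_contra hnot; push_neg at hnot
        have hp1x : x ≤ pq.1 := by
          by_contra hc; push_neg at hc
          have hmem2 : x ∈ Set.Ioo pq.1 pq.2 ∩ T := ⟨⟨hc, hnot⟩, hx⟩
          rw [hg'.2.2.2] at hmem2; simp at hmem2
        have h9 : pq.2 - pq.1 ≤ y - x := by linarith
        linarith
    have habs : |x - y| = y - x := by rw [abs_of_nonpos (by linarith)]; ring
    have h2 : threadDist lS aS (F x) (F y) < aS := by
      have h1 := hFd x hx y hy
      rw [habs] at h1
      exact lt_of_le_of_lt h1 (by rw [← hKr]; exact (mul_lt_mul_iff_right₀ hK).mpr hlt)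
    have h3 := ThreadAux.td_small (hF01 x hx) (hF01 y hy) h2
    have h4 : |g y - g x| = |F x - F y| := by
      rw [hgval, hgval, hNeq, abs_sub_comm]; ring_nf
    rw [h4, h3]
    have h5 := hFd x hx y hy
    rwa [habs] at h5
  -- global euclidean Lipschitz bound for g on T
  have hglipLE : ∀ x ∈ T, ∀ y ∈ T, x ≤ y → |g y - g x| ≤ K * (y - x) := by
    intro x hx y hy hxy
    set A : Set ℝ := {t : ℝ | t ∈ T ∧ t ∈ Icc x y ∧ |g t - g x| ≤ K * (t - x)} with hAdef
    have hxA : x ∈ A := ⟨hx, ⟨le_refl x, hxy⟩, by simp⟩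
    have hAne : A.Nonempty := ⟨x, hxA⟩
    have hAbdd : BddAbove A := ⟨y, fun t ht => ht.2.1.2⟩
    set t0 : ℝ := sSup A with ht0def
    have hsubT : A ⊆ T := fun t ht => ht.1
    have ht0T : t0 ∈ T := by
      have h1 : t0 ∈ closure A := csSup_mem_closure hAne hAbdd
      have h2 : closure A ⊆ T := by
        rw [← hTc.closure_eq]; exact closure_mono hsubT
      exact h2 h1
    have ht0I : t0 ∈ Icc x y := by
      have h1 : t0 ∈ closure A := csSup_mem_closure hAne hAbdd
      have h2 : closure A ⊆ Icc x y := by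
        rw [← (isClosed_Icc : IsClosed (Icc x y)).closure_eq]
        exact closure_mono fun t ht => ht.2.1
      exact h2 h1
    have ht0A : t0 ∈ A := by
      obtain ⟨t1, ht1A, ht1⟩ : ∃ t1 ∈ A, t0 - r < t1 :=
        exists_lt_of_lt_csSup hAne (by linarith)
      have ht1le : t1 ≤ t0 := le_csSup hAbdd ht1A
      have hloc := hlocal t1 ht1A.1 t0 ht0T ht1le (by linarith)
      refine ⟨ht0T, ht0I, ?_⟩
      have htr : |g t0 - g x| ≤ |g t0 - g t1| + |g t1 - g x| := abs_sub_le _ _ _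
      have h1 := ht1A.2.2
      have h2 : K * (t0 - t1) + K * (t1 - x) = K * (t0 - x) := by ring
      linarith
    have ht0y : t0 = y := by
      by_contra hne
      have ht0lt : t0 < y := lt_of_le_of_ne ht0I.2 hne
      by_cases hcase : ∃ t, t ∈ T ∧ t0 < t ∧ t ≤ y ∧ t - t0 < r
      · obtain ⟨t, htT, htgt, htley, htr⟩ := hcase
        have hloc := hlocal t0 ht0T t htT htgt.le htr
        have htA : t ∈ A := by
          refine ⟨htT, ⟨le_trans ht0I.1 htgt.le, htley⟩, ?_⟩
          have h1 := ht0A.2.2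
          have htr2 : |g t - g x| ≤ |g t - g t0| + |g t0 - g x| := abs_sub_le _ _ _
          have h2 : K * (t - t0) + K * (t0 - x) = K * (t - x) := by ring
          linarith
        have h3 := le_csSup hAbdd htA
        linarith
      · push_neg at hcase
        set B : Set ℝ := T ∩ Ioc t0 y with hBdef
        have hyB : y ∈ B := ⟨hy, ht0lt, le_refl y⟩
        have hBne : B.Nonempty := ⟨y, hyB⟩
        have hBbdd : BddBelow B := ⟨t0, fun t ht => ht.2.1.le⟩
        set q : ℝ := sInf B with hqdef
        have hqge : t0 + r ≤ q := by
          apply le_csInf hBne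
          intro b hb
          have h4 := hcase b hb.1 hb.2.1 hb.2.2
          linarith
        have hqT : q ∈ T := by
          have h1 : q ∈ closure B := csInf_mem_closure hBne hBbdd
          have h2 : closure B ⊆ T := by
            rw [← hTc.closure_eq]; exact closure_mono fun t ht => ht.1
          exact h2 h1
        have hqy : q ≤ y := csInf_le hBbdd hyB
        have hgapq : IsGap T t0 q := by
          refine ⟨ht0T, hqT, by linarith, ?_⟩
          rw [Set.eq_empty_iff_forall_notMem]
          rintro t ⟨⟨h1, h2⟩, h3⟩
          have h5 : t ∈ B := ⟨h3, h1, by linarith⟩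
          have h6 := csInf_le hBbdd h5
          linarith
        have hcr := hgap t0 q hgapq
        have hqA : q ∈ A := by
          refine ⟨hqT, ⟨le_trans ht0I.1 (by linarith), hqy⟩, ?_⟩
          have h1 := ht0A.2.2
          have htr2 : |g q - g x| ≤ |g q - g t0| + |g t0 - g x| := abs_sub_le _ _ _
          have h2 : K * (q - t0) + K * (t0 - x) = K * (q - x) := by ring
          linarith
        have h3 := le_csSup hAbdd hqA
        linarith
    have h7 := ht0A.2.2
    rwa [ht0y] at h7
  have hglip : ∀ x ∈ T, ∀ y ∈ T, |g y - g x| ≤ K * |y - x| := by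
    intro x hx y hy
    rcases le_total x y with h | h
    · rw [abs_of_nonneg (by linarith : (0:ℝ) ≤ y - x)]
      exact hglipLE x hx y hy h
    · rw [abs_of_nonpos (by linarith : y - x ≤ 0)]
      have h1 := hglipLE y hy x hx h
      rw [abs_sub_comm] at h1
      calc |g y - g x| ≤ K * (x - y) := h1
      _ = K * -(y - x) := by ring
  -- g at 0
  have hN0 : ThreadAux.NN Φ F L 0 = 0 := by
    rw [ThreadAux.NN]
    have h1 : Φ.filter (fun pq => pq.2 ≤ (0:ℝ)) = ∅ := by
      rw [Finset.filter_eq_empty_iff]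
      intro pq hpqΦ
      obtain ⟨hg', _⟩ := (hΦ pq).mp hpqΦ
      have h2 : 0 ≤ pq.1 := (hTsub hg'.1).1
      have h3 : pq.1 < pq.2 := hg'.2.2.1
      push_neg
      linarith
    rw [h1, Finset.sum_empty]
    exact neg_zero
  have hg0 : g 0 = 0 := by
    rw [hgval, hN0, hF0]; simp
  -- the trichotomy for values of g on T
  have htri : ∀ t ∈ T, g t ∈ S ∨ L ≤ g t ∨ g t ≤ -aS := by
    intro t ht
    rcases lt_trichotomy (ThreadAux.NN Φ F L t) 0 with h | h | h
    · right; right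
      have h0 : ThreadAux.NN Φ F L t ≤ -1 := by omega
      have h1 : (ThreadAux.NN Φ F L t : ℝ) ≤ -1 := by exact_mod_cast h0
      have h2 := (hF01 t ht).2
      rw [hgval]
      simp only [hLdef] at *
      nlinarith
    · left
      rw [hgval, h]
      simpa using hFmap ht
    · right; left
      have h1 : (1:ℝ) ≤ (ThreadAux.NN Φ F L t : ℝ) := by exact_mod_cast h
      have h2 := (hF01 t ht).1
      rw [hgval]
      nlinarith
  have hglT : g lT = lS + L * ((ThreadAux.NN Φ F L lT : ℤ) : ℝ) := by
    rw [hgval, hFl]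
  -- symmetrization helper
  have symm_reduce : ∀ G : ℝ → ℝ,
      (∀ x ∈ T, ∀ y ∈ T, x ≤ y → threadDist lS aS (G x) (G y) ≤ K * threadDist lT aT x y) →
      (∀ x ∈ T, ∀ y ∈ T, threadDist lS aS (G x) (G y) ≤ K * threadDist lT aT x y) := by
    intro G hG x hx y hy
    rcases le_total x y with h | h
    · exact hG x hx y hy h
    · rw [ThreadAux.td_comm lS aS, ThreadAux.td_comm lT aT]
      exact hG y hy x hx h
  -- dichotomy on the winding number
  rcases le_or_gt 0 (ThreadAux.NN Φ F L lT) with hwind | hwind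
  · -- non-negative winding : running maximum construction
    have hglTge : lS ≤ g lT := by
      rw [hglT]
      have h1 : (0:ℝ) ≤ (ThreadAux.NN Φ F L lT : ℝ) := by exact_mod_cast hwind
      nlinarith
    set M : ℝ → ℝ := fun x => sSup (g '' (T ∩ Icc 0 x)) with hMdef
    set G : ℝ → ℝ := fun x => min lS (max 0 (M x)) with hGdef
    have himg_ne : ∀ x : ℝ, 0 ≤ x → (g '' (T ∩ Icc 0 x)).Nonempty := by
      intro x hx0
      exact ⟨g 0, 0, ⟨hT0, le_refl 0, hx0⟩, rfl⟩
    have himg_bdd : ∀ x : ℝ, BddAbove (g '' (T ∩ Icc 0 x)) := by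
      intro x
      refine ⟨K * lT, ?_⟩
      rintro v ⟨t, ⟨htT, _, _⟩, rfl⟩
      have h1 := hglip 0 hT0 t htT
      rw [hg0, sub_zero] at h1
      have h2 : |t - 0| = t := by
        rw [sub_zero, abs_of_nonneg (hTsub htT).1]
      rw [h2] at h1
      have h3 : g t ≤ |g t| := le_abs_self _
      have h5 : K * t ≤ K * lT := mul_le_mul_of_nonneg_left (hTsub htT).2 hK.le
      linarith
    have hM_mono : ∀ x ∈ T, ∀ y ∈ T, x ≤ y → M x ≤ M y := by
      intro x hx y hy hxy
      apply csSup_le_csSup (himg_bdd y) (himg_ne x (hTsub hx).1)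
      apply Set.image_mono
      intro t ht
      exact ⟨ht.1, ht.2.1, le_trans ht.2.2 hxy⟩
    have hM_lip : ∀ x ∈ T, ∀ y ∈ T, x ≤ y → M y ≤ M x + K * (y - x) := by
      intro x hx y hy hxy
      apply csSup_le (himg_ne y (hTsub hy).1)
      rintro v ⟨t, ⟨htT, ht0, hty⟩, rfl⟩
      have hKyx : 0 ≤ K * (y - x) := mul_nonneg hK.le (by linarith)
      rcases le_total t x with h | h
      · have h1 : g t ≤ M x := le_csSup (himg_bdd x) ⟨t, ⟨htT, ht0, h⟩, rfl⟩
        linarith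
      · have h1 : g x ≤ M x := le_csSup (himg_bdd x) ⟨x, ⟨hx, (hTsub hx).1, le_refl x⟩, rfl⟩
        have h2 := hglip x hx t htT
        have h3 : |t - x| = t - x := abs_of_nonneg (by linarith)
        rw [h3] at h2
        have h4 : g t - g x ≤ K * (t - x) := le_trans (le_abs_self _) h2
        have h5 : K * (t - x) ≤ K * (y - x) := mul_le_mul_of_nonneg_left (by linarith) hK.le
        linarith
    -- clamping lemmas
    have hclamp_mono : ∀ u v : ℝ, u ≤ v → min lS (max 0 u) ≤ min lS (max 0 v) :=
      fun u v huv => min_le_min (le_refl lS) (max_le_max (le_refl 0) huv)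
    have hclamp_lip : ∀ u v : ℝ, u ≤ v → min lS (max 0 v) - min lS (max 0 u) ≤ v - u := by
      intro u v huv
      have h1 : max 0 v - max 0 u ≤ v - u := by
        have ha : max 0 v ≤ max 0 u + (v - u) :=
          max_le (add_nonneg (le_max_left 0 u) (by linarith))
            (by linarith [le_max_right 0 u])
        linarith
      have hmm : max 0 u ≤ max 0 v := max_le_max (le_refl 0) huv
      rcases le_total lS (max 0 u) with h | h
      · rw [min_eq_left h, min_eq_left (le_trans h hmm)]; linarith
      · rw [min_eq_right h]
        rcases le_total lS (max 0 v) with h' | h'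
        · rw [min_eq_left h']; linarith
        · rw [min_eq_right h']; linarith
    have hGmono : ∀ x ∈ T, ∀ y ∈ T, x ≤ y → G x ≤ G y := by
      intro x hx y hy hxy
      exact hclamp_mono _ _ (hM_mono x hx y hy hxy)
    have hGlip : ∀ x ∈ T, ∀ y ∈ T, x ≤ y → G y - G x ≤ K * (y - x) := by
      intro x hx y hy hxy
      have hKyx : 0 ≤ K * (y - x) := mul_nonneg hK.le (by linarith)
      rcases le_total (M x) (M y) with h | h
      · have h1 := hclamp_lip (M x) (M y) h
        have h2 := hM_lip x hx y hy hxy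
        simp only [hGdef]
        linarith
      · have h1 := hclamp_mono (M y) (M x) h
        simp only [hGdef]
        linarith
    have hT00 : T ∩ Icc 0 0 = {0} := by
      apply Set.eq_singleton_iff_unique_mem.mpr
      refine ⟨⟨hT0, le_refl 0, le_refl 0⟩, ?_⟩
      intro t ht
      exact le_antisymm ht.2.2 ht.2.1
    have hM0 : M 0 = 0 := by
      simp only [hMdef, hT00, Set.image_singleton, hg0]
      exact csSup_singleton 0
    have hG0 : G 0 = 0 := by
      simp only [hGdef, hM0]
      rw [max_self, min_eq_right hlS0]
    have hMlT : lS ≤ M lT := by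
      refine le_trans hglTge (le_csSup (himg_bdd lT) ?_)
      exact ⟨lT, ⟨hTl, hlT0, le_refl lT⟩, rfl⟩
    have hGlT : G lT = lS := by
      simp only [hGdef]
      rw [max_eq_right (le_trans hlS0 hMlT), min_eq_left hMlT]
    have hGmem : Set.MapsTo G T S := by
      intro x hx
      have hx0 : 0 ≤ x := (hTsub hx).1
      have hcomp : IsCompact (T ∩ Icc 0 x) := (isCompact_Icc).inter_left hTc
      have hconton : ContinuousOn g (T ∩ Icc 0 x) := by
        apply LipschitzOnWith.continuousOn (K := Real.toNNReal K)
        apply LipschitzOnWith.of_dist_le_mul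
        intro a ha b hb
        rw [Real.dist_eq, Real.dist_eq]
        have h1 := hglip b hb.1 a ha.1
        calc |g a - g b| ≤ K * |a - b| := h1
        _ = (Real.toNNReal K) * |a - b| := by rw [Real.coe_toNNReal K hK.le]
      obtain ⟨t, htmem, hmax⟩ := hcomp.exists_isMaxOn ⟨0, hT0, le_refl 0, hx0⟩ hconton
      have hMt : M x = g t := by
        apply le_antisymm
        · apply csSup_le (himg_ne x hx0)
          rintro v ⟨s, hs, rfl⟩
          exact hmax hs
        · exact le_csSup (himg_bdd x) ⟨t, htmem, rfl⟩
      rcases htri t htmem.1 with h | h | h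
      · have h1 := hSsub h
        have h2 : G x = g t := by
          simp only [hGdef, hMt]
          rw [max_eq_right h1.1, min_eq_right h1.2]
        rw [h2]; exact h
      · have h2 : G x = lS := by
          simp only [hGdef, hMt]
          rw [max_eq_right (le_trans hlS0 (le_trans hlSL.le h)),
            min_eq_left (le_trans hlSL.le h)]
        rw [h2]; exact hSl
      · have h2 : G x = 0 := by
          simp only [hGdef, hMt]
          rw [max_eq_left (by linarith), min_eq_right hlS0]
        rw [h2]; exact hS0
    refine ⟨G, hGmem, hGmono, symm_reduce G ?_, hG0, hGlT⟩
    intro x hx y hy hxy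
    have hx0 : 0 ≤ x := (hTsub hx).1
    have hyl : y ≤ lT := (hTsub hy).2
    have e1 : G y - G x ≤ K * (y - x) := hGlip x hx y hy hxy
    have e0 : G x ≤ G y := hGmono x hx y hy hxy
    have e2 : G x ≤ K * x := by
      have h1 := hGlip 0 hT0 x hx hx0
      rw [hG0] at h1
      have h2 : K * (x - 0) = K * x := by ring
      linarith
    have e3 : lS - G y ≤ K * (lT - y) := by
      have h1 := hGlip y hy lT hTl hyl
      rw [hGlT] at h1
      linarith
    apply ThreadAux.le_K_td hK.le hxy
    · calc threadDist lS aS (G x) (G y) ≤ |G x - G y| := ThreadAux.td_le_abs _ _ _ _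
      _ = G y - G x := by rw [abs_of_nonpos (by linarith)]; ring
      _ ≤ K * (y - x) := e1
    · calc threadDist lS aS (G x) (G y) ≤ G x + (lS - G y) + aS :=
        ThreadAux.td_le_wrap _ _ _ _
      _ ≤ K * x + K * (lT - y) + K * aT := by linarith
      _ = K * (x + (lT - y) + aT) := by ring
  · -- negative winding : step construction
    have hwind1 : ThreadAux.NN Φ F L lT ≤ -1 := by omega
    have hglTle : g lT ≤ -aS := by
      rw [hglT]
      have h1 : ((ThreadAux.NN Φ F L lT : ℤ) : ℝ) ≤ -1 := by exact_mod_cast hwind1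
      have h2 : L * ((ThreadAux.NN Φ F L lT : ℤ) : ℝ) ≤ L * (-1) := by
        exact mul_le_mul_of_nonneg_left h1 hLpos.le
      simp only [hLdef] at h2 ⊢
      linarith
    set B : Set ℝ := {t : ℝ | t ∈ T ∧ g t ≤ -aS} with hBdef
    have hBne : B.Nonempty := ⟨lT, hTl, hglTle⟩
    have hBbdd : BddBelow B := ⟨0, fun t ht => (hTsub ht.1).1⟩
    set τ : ℝ := sInf B with hτdef
    have hτT : τ ∈ T := by
      have h1 : τ ∈ closure B := csInf_mem_closure hBne hBbdd
      have h2 : closure B ⊆ T := by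
        rw [← hTc.closure_eq]; exact closure_mono fun t ht => ht.1
      exact h2 h1
    have hτg : g τ ≤ -aS := by
      apply le_of_forall_pos_le_add
      intro ε hε
      obtain ⟨t1, ht1B, ht1⟩ : ∃ t1 ∈ B, t1 < τ + ε / K :=
        exists_lt_of_csInf_lt hBne (by linarith [div_pos hε hK])
      have hτt1 : τ ≤ t1 := csInf_le hBbdd ht1B
      have h1 := hglip τ hτT t1 ht1B.1
      have habs : |t1 - τ| = t1 - τ := abs_of_nonneg (by linarith)
      rw [habs] at h1
      have h2 : g τ - g t1 ≤ |g t1 - g τ| := by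
        rw [abs_sub_comm]; exact le_abs_self _
      have h3 : K * (t1 - τ) < K * (ε / K) := by
        apply mul_lt_mul_of_pos_left ?_ hK
        linarith
      have h4 : K * (ε / K) = ε := by
        rw [mul_comm, div_mul_cancel₀ _ (ne_of_gt hK)]
      have h5 := ht1B.2
      linarith
    have hτ0 : 0 ≤ τ := le_csInf hBne fun b hb => (hTsub hb.1).1
    have hτpos : 0 < τ := by
      rcases lt_or_eq_of_le hτ0 with h | h
      · exact h
      · exfalso
        rw [← h] at hτg
        rw [hg0] at hτg
        linarith
    have hτle : τ ≤ lT := csInf_le hBbdd ⟨hTl, hglTle⟩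
    set G : ℝ → ℝ := fun x => if x < τ then 0 else lS with hGdef
    have hG0 : G 0 = 0 := by simp only [hGdef]; rw [if_pos hτpos]
    have hGlT : G lT = lS := by simp only [hGdef]; rw [if_neg (not_lt.mpr hτle)]
    have hGmono : ∀ x ∈ T, ∀ y ∈ T, x ≤ y → G x ≤ G y := by
      intro x hx y hy hxy
      simp only [hGdef]
      by_cases h1 : x < τ
      · rw [if_pos h1]
        by_cases h2 : y < τ
        · rw [if_pos h2]
        · rw [if_neg h2]; exact hlS0
      · rw [if_neg h1, if_neg fun h2 => h1 (lt_of_le_of_lt hxy h2)]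
    have hGmem : Set.MapsTo G T S := by
      intro x hx
      simp only [hGdef]
      by_cases h1 : x < τ
      · rw [if_pos h1]; exact hS0
      · rw [if_neg h1]; exact hSl
    refine ⟨G, hGmem, hGmono, symm_reduce G ?_, hG0, hGlT⟩
    intro x hx y hy hxy
    have hx0 : 0 ≤ x := (hTsub hx).1
    have hyl : y ≤ lT := (hTsub hy).2
    have hTd0 : 0 ≤ K * threadDist lT aT x y :=
      mul_nonneg hK.le (ThreadAux.td_nonneg haT.le (hTsub hx) (hTsub hy))
    by_cases h1 : x < τ
    · by_cases h2 : y < τ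
      · have h3 : G x = G y := by simp only [hGdef]; rw [if_pos h1, if_pos h2]
        refine le_trans ?_ hTd0
        rw [h3]
        refine le_trans (ThreadAux.td_le_abs _ _ _ _) ?_
        simp
      · have hGx : G x = 0 := by simp only [hGdef]; rw [if_pos h1]
        have hGy : G y = lS := by simp only [hGdef]; rw [if_neg h2]
        rw [hGx, hGy, ThreadAux.td_ends haS haSl]
        have hgx0 : 0 ≤ g x := by
          have hnotB : ¬ (g x ≤ -aS) := by
            intro hc
            have h4 : τ ≤ x := csInf_le hBbdd ⟨hx, hc⟩
            linarith
          rcases htri x hx with h | h | h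
          · exact (hSsub h).1
          · linarith
          · exact absurd h hnotB
        have hτy : τ ≤ y := not_lt.mp h2
        have hstep : aS ≤ K * (τ - x) := by
          have h5 := hglip x hx τ hτT
          have habs : |τ - x| = τ - x := abs_of_nonneg (by linarith)
          rw [habs] at h5
          have h6 : g x - g τ ≤ |g τ - g x| := by
            rw [abs_sub_comm]; exact le_abs_self _
          linarith
        apply ThreadAux.le_K_td hK.le hxy
        · have h7 : K * (τ - x) ≤ K * (y - x) :=
            mul_le_mul_of_nonneg_left (by linarith) hK.le
          linarith
        · have h7 : K * aT ≤ K * (x + (lT - y) + aT) :=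
            mul_le_mul_of_nonneg_left (by linarith) hK.le
          linarith
    · have h2 : ¬ y < τ := fun h2 => h1 (lt_of_le_of_lt hxy h2)
      have h3 : G x = G y := by simp only [hGdef]; rw [if_neg h1, if_neg h2]
      refine le_trans ?_ hTd0
      rw [h3]
      refine le_trans (ThreadAux.td_le_abs _ _ _ _) ?_
      simp
end

section
/- Let T and S be threads of lengths l_T, l_S and widths a_T, a_S. Let K ≥ 1 and let F : T → S be K-Lipschitz with F(0) = A and F(l_T) = B where A, B ∈ S and A < B. If every gap of T has length strictly less than a_S/K, then the truncation G : T → [A,B] ∩ S defined by G(x) = A if F(x) ≤ A, G(x) = F(x) if A ≤ F(x) ≤ B, and G(x) = B if F(x) ≥ B, is K-Lipschitz, where [A,B] ∩ S carries the thread metric of a thread with extreme points A and B. -/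
open Set

lemma threadDist_symm (l a x y : ℝ) : threadDist l a x y = threadDist l a y x := by
  simp only [threadDist]
  rw [abs_sub_comm, min_comm (x + (l - y) + a)]

lemma threadDist_le_abs (l a x y : ℝ) : threadDist l a x y ≤ |x - y| :=
  min_le_left _ _

lemma abs_le_threadDist_of_lt {l a x y : ℝ} (hx0 : 0 ≤ x) (hxl : x ≤ l)
    (hy0 : 0 ≤ y) (hyl : y ≤ l) (h : threadDist l a x y < a) :
    |x - y| ≤ threadDist l a x y := by
  simp only [threadDist] at h ⊢
  have h1 : a ≤ x + (l - y) + a := by linarith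
  have h2 : a ≤ y + (l - x) + a := by linarith
  rcases le_total |x - y| (min (x + (l - y) + a) (y + (l - x) + a)) with hm | hm
  · rw [min_eq_left hm]
  · rw [min_eq_right hm] at h
    exact absurd h (not_lt.mpr (le_min h1 h2))

lemma abs_min_sub_min_le_abs' (p q r : ℝ) : |min p r - min q r| ≤ |p - q| := by
  rcases le_total p r with h1 | h1 <;> rcases le_total q r with h2 | h2
  · rw [min_eq_left h1, min_eq_left h2]
  · rw [min_eq_left h1, min_eq_right h2,
      abs_of_nonpos (by linarith), abs_of_nonpos (by linarith)]
    linarith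
  · rw [min_eq_right h1, min_eq_left h2,
      abs_of_nonneg (by linarith), abs_of_nonneg (by linarith)]
    linarith
  · rw [min_eq_right h1, min_eq_right h2]
    simp [abs_nonneg]

lemma abs_max_sub_max_le_abs' (p q r : ℝ) : |max r p - max r q| ≤ |p - q| := by
  rcases le_total r p with h1 | h1 <;> rcases le_total r q with h2 | h2
  · rw [max_eq_right h1, max_eq_right h2]
  · rw [max_eq_right h1, max_eq_left h2,
      abs_of_nonneg (by linarith), abs_of_nonneg (by linarith)]
    linarith
  · rw [max_eq_left h1, max_eq_right h2,
      abs_of_nonpos (by linarith), abs_of_nonpos (by linarith)]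
    linarith
  · rw [max_eq_left h1, max_eq_left h2]
    simp [abs_nonneg]

/-- truncating a `K`-Lipschitz map `F : T → S` with `F 0 = A`,
`F l_T = B` to the subthread `[A, B] ∩ S` (whose width is the `S`-distance
between `A` and `B`) yields a `K`-Lipschitz map, provided every gap of `T`
is shorter than `a_S / K`. -/
theorem truncation_lipschitz
    (lT aT lS aS : ℝ) (haT : 0 < aT) (haTl : aT ≤ lT) (haS : 0 < aS) (haSl : aS ≤ lS)
    (T S : Set ℝ) (hT : IsThread T lT) (hS : IsThread S lS)
    (K : ℝ) (hK : 1 ≤ K)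
    (A B : ℝ) (hA : A ∈ S) (hB : B ∈ S) (hAB : A < B)
    (F : ℝ → ℝ) (hFmap : Set.MapsTo F T S)
    (hFlip : ∀ x ∈ T, ∀ y ∈ T, threadDist lS aS (F x) (F y) ≤ K * threadDist lT aT x y)
    (hF0 : F 0 = A) (hFl : F lT = B)
    (hgaps : ∀ x y, IsGap T x y → y - x < aS / K)
    (G : ℝ → ℝ)
    (hG : ∀ x, (F x ≤ A → G x = A) ∧ (A ≤ F x → F x ≤ B → G x = F x) ∧ (B ≤ F x → G x = B)) :
    Set.MapsTo G T (Set.Icc A B ∩ S) ∧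
      (∀ x ∈ T, ∀ y ∈ T,
        threadDist (B - A) (threadDist lS aS A B) (G x - A) (G y - A)
          ≤ K * threadDist lT aT x y) := by
  obtain ⟨hTc, hTsub, hT0, hTl⟩ := hT
  obtain ⟨hSc, hSsub, hS0, hSl⟩ := hS
  have hK0 : (0 : ℝ) < K := lt_of_lt_of_le one_pos hK
  have hA0 : 0 ≤ A := (hSsub hA).1
  have hAl : A ≤ lS := (hSsub hA).2
  have hB0 : 0 ≤ B := (hSsub hB).1
  have hBl : B ≤ lS := (hSsub hB).2
  have hFb : ∀ x ∈ T, 0 ≤ F x ∧ F x ≤ lS := by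
    intro x hx
    have := hSsub (hFmap hx)
    exact ⟨this.1, this.2⟩
  have hTb : ∀ x ∈ T, 0 ≤ x ∧ x ≤ lT := by
    intro x hx
    have := hTsub hx
    exact ⟨this.1, this.2⟩
  -- G is the clamp of F
  have hGc : ∀ x, G x = max A (min (F x) B) := by
    intro x
    obtain ⟨g1, g2, g3⟩ := hG x
    rcases le_total (F x) A with h | h
    · rw [g1 h, min_eq_left (le_of_lt (lt_of_le_of_lt h hAB)), max_eq_left h]
    · rcases le_total (F x) B with h2 | h2
      · rw [g2 h h2, min_eq_left h2, max_eq_right h]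
      · rw [g3 h2, min_eq_right h2, max_eq_right (le_of_lt hAB)]
  have hGrange : ∀ x, A ≤ G x ∧ G x ≤ B := by
    intro x
    rw [hGc x]
    exact ⟨le_max_left _ _, max_le (le_of_lt hAB) (min_le_right _ _)⟩
  have hGmem : ∀ x ∈ T, G x ∈ S := by
    intro x hx
    obtain ⟨g1, g2, g3⟩ := hG x
    rcases le_total (F x) A with h | h
    · rw [g1 h]; exact hA
    · rcases le_total (F x) B with h2 | h2
      · rw [g2 h h2]; exact hFmap hx
      · rw [g3 h2]; exact hB
  have hG0 : G 0 = A := by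
    obtain ⟨g1, g2, g3⟩ := hG 0
    rw [g2 (le_of_eq hF0.symm) (by rw [hF0]; exact le_of_lt hAB), hF0]
  have hGl : G lT = B := (hG lT).2.2 (le_of_eq hFl.symm)
  have hGlip : ∀ x y, |G x - G y| ≤ |F x - F y| := by
    intro x y
    rw [hGc x, hGc y]
    exact le_trans (abs_max_sub_max_le_abs' _ _ _) (abs_min_sub_min_le_abs' _ _ _)
  -- Lipschitz wrt euclidean distance
  have hlip' : ∀ x ∈ T, ∀ y ∈ T, threadDist lS aS (F x) (F y) ≤ K * |x - y| := by
    intro x hx y hy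
    exact le_trans (hFlip x hx y hy)
      (mul_le_mul_of_nonneg_left (threadDist_le_abs _ _ _ _) (le_of_lt hK0))
  have habs0 : ∀ x ∈ T, ∀ y ∈ T, threadDist lS aS (F x) (F y) < aS →
      |F x - F y| ≤ threadDist lS aS (F x) (F y) := by
    intro x hx y hy h
    exact abs_le_threadDist_of_lt (hFb x hx).1 (hFb x hx).2 (hFb y hy).1 (hFb y hy).2 h
  -- step lemma: from any point of `T` one can move right by a small step
  have hstep : ∀ p ∈ T, ∀ v ∈ T, p < v →
      ∃ q ∈ T, p < q ∧ q ≤ v ∧ |F q - F p| < aS := by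
    intro p hp v hv hpv
    set E := T ∩ Set.Ioc p v with hE
    have hne : v ∈ E := ⟨hv, hpv, le_refl v⟩
    have hbdd : BddBelow E := ⟨p, fun t ht => le_of_lt ht.2.1⟩
    have lipcalc : ∀ q, q ∈ T → p < q → q ≤ v → q - p < aS / K → |F q - F p| < aS := by
      intro q hq h1 h2 h3
      have hd : threadDist lS aS (F p) (F q) ≤ K * |p - q| := hlip' p hp q hq
      have habs : |p - q| = q - p := by rw [abs_sub_comm, abs_of_nonneg (by linarith)]
      have hKd : K * |p - q| < aS := by
        rw [habs]
        calc K * (q - p) < K * (aS / K) := by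
              exact mul_lt_mul_of_pos_left h3 hK0
          _ = aS := by field_simp
      have hlt : threadDist lS aS (F p) (F q) < aS := lt_of_le_of_lt hd hKd
      have := habs0 p hp q hq hlt
      rw [abs_sub_comm]
      linarith
    rcases lt_or_ge p (sInf E) with h | h
    · have hmem : sInf E ∈ T ∩ Set.Icc p v := by
        have hsub : closure E ⊆ T ∩ Set.Icc p v :=
          closure_minimal (fun t ht => ⟨ht.1, le_of_lt ht.2.1, ht.2.2⟩)
            (hTc.inter isClosed_Icc)
        exact hsub (csInf_mem_closure ⟨v, hne⟩ hbdd)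
      have hgap : IsGap T p (sInf E) := by
        refine ⟨hp, hmem.1, h, ?_⟩
        rw [Set.eq_empty_iff_forall_notMem]
        rintro t ⟨⟨ht1, ht2⟩, htT⟩
        have : t ∈ E := ⟨htT, ht1, le_trans (le_of_lt ht2) hmem.2.2⟩
        exact absurd (csInf_le hbdd this) (not_le.mpr ht2)
      have hlen := hgaps p (sInf E) hgap
      exact ⟨sInf E, hmem.1, h, hmem.2.2, lipcalc _ hmem.1 h hmem.2.2 hlen⟩
    · have hpos : 0 < aS / K := div_pos haS hK0
      obtain ⟨q, hqE, hq⟩ := exists_lt_of_csInf_lt ⟨v, hne⟩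
        (show sInf E < p + aS / K by linarith)
      exact ⟨q, hqE.1, hqE.2.1, hqE.2.2, lipcalc q hqE.1 hqE.2.1 hqE.2.2 (by linarith)⟩
  -- intermediate value, upward crossing
  have hIVTup : ∀ u ∈ T, ∀ v ∈ T, u ≤ v → ∀ c, F u ≤ c → c < F v →
      ∃ t ∈ T, u ≤ t ∧ t ≤ v ∧ c < F t ∧ F t < c + aS := by
    intro u hu v hv huv c hcu hcv
    set E := {t | t ∈ T ∧ u ≤ t ∧ t ≤ v ∧ F t ≤ c} with hE
    have hne : u ∈ E := ⟨hu, le_refl u, huv, hcu⟩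
    have hbdd : BddAbove E := ⟨v, fun t ht => ht.2.2.1⟩
    set p := sSup E with hp
    have hpT : p ∈ T := by
      have hsub : closure E ⊆ T := closure_minimal (fun t ht => ht.1) hTc
      exact hsub (csSup_mem_closure ⟨u, hne⟩ hbdd)
    have hup : u ≤ p := le_csSup hbdd hne
    have hpv : p ≤ v := csSup_le ⟨u, hne⟩ fun t ht => ht.2.2.1
    have hFp : F p ≤ c := by
      by_contra hc
      push_neg at hc
      have hε : 0 < min (aS / K) ((F p - c) / K) :=
        lt_min (div_pos haS hK0) (div_pos (by linarith) hK0)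
      obtain ⟨t, htE, htp⟩ := exists_lt_of_lt_csSup ⟨u, hne⟩
        (show p - min (aS / K) ((F p - c) / K) < p by linarith)
      have htle : t ≤ p := le_csSup hbdd htE
      have h1 : |p - t| < aS / K := by
        rw [abs_of_nonneg (by linarith)]
        have := min_le_left (aS / K) ((F p - c) / K)
        linarith
      have h2 : |p - t| < (F p - c) / K := by
        rw [abs_of_nonneg (by linarith)]
        have := min_le_right (aS / K) ((F p - c) / K)
        linarith
      have hd : threadDist lS aS (F p) (F t) ≤ K * |p - t| := hlip' p hpT t htE.1
      have e1 : K * |p - t| < aS := by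
        calc K * |p - t| < K * (aS / K) := mul_lt_mul_of_pos_left h1 hK0
          _ = aS := by field_simp
      have e2 : K * |p - t| < F p - c := by
        calc K * |p - t| < K * ((F p - c) / K) := mul_lt_mul_of_pos_left h2 hK0
          _ = F p - c := by field_simp
      have := habs0 p hpT t htE.1 (lt_of_le_of_lt hd e1)
      have h3 : F p - c ≤ |F p - F t| := by
        have := htE.2.2.2
        have h4 : F p - c ≤ F p - F t := by linarith
        exact le_trans h4 (le_abs_self _)
      linarith
    have hpv' : p < v := lt_of_le_of_ne hpv (fun h => by rw [h] at hFp; linarith)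
    obtain ⟨q, hqT, hpq, hqv, hqa⟩ := hstep p hpT v hv hpv'
    have hcq : c < F q := by
      by_contra hc
      push_neg at hc
      have : q ∈ E := ⟨hqT, le_trans hup (le_of_lt hpq), hqv, hc⟩
      exact absurd (le_csSup hbdd this) (not_le.mpr hpq)
    refine ⟨q, hqT, le_trans hup (le_of_lt hpq), hqv, hcq, ?_⟩
    have : F q - F p ≤ |F q - F p| := le_abs_self _
    linarith
  -- intermediate value, downward crossing
  have hIVTdown : ∀ u ∈ T, ∀ v ∈ T, u ≤ v → ∀ c, c ≤ F u → F v < c →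
      ∃ t ∈ T, u ≤ t ∧ t ≤ v ∧ c - aS < F t ∧ F t < c := by
    intro u hu v hv huv c hcu hcv
    set E := {t | t ∈ T ∧ u ≤ t ∧ t ≤ v ∧ c ≤ F t} with hE
    have hne : u ∈ E := ⟨hu, le_refl u, huv, hcu⟩
    have hbdd : BddAbove E := ⟨v, fun t ht => ht.2.2.1⟩
    set p := sSup E with hp
    have hpT : p ∈ T := by
      have hsub : closure E ⊆ T := closure_minimal (fun t ht => ht.1) hTc
      exact hsub (csSup_mem_closure ⟨u, hne⟩ hbdd)
    have hup : u ≤ p := le_csSup hbdd hne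
    have hpv : p ≤ v := csSup_le ⟨u, hne⟩ fun t ht => ht.2.2.1
    have hFp : c ≤ F p := by
      by_contra hc
      push_neg at hc
      have hε : 0 < min (aS / K) ((c - F p) / K) :=
        lt_min (div_pos haS hK0) (div_pos (by linarith) hK0)
      obtain ⟨t, htE, htp⟩ := exists_lt_of_lt_csSup ⟨u, hne⟩
        (show p - min (aS / K) ((c - F p) / K) < p by linarith)
      have htle : t ≤ p := le_csSup hbdd htE
      have h1 : |p - t| < aS / K := by
        rw [abs_of_nonneg (by linarith)]
        have := min_le_left (aS / K) ((c - F p) / K)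
        linarith
      have h2 : |p - t| < (c - F p) / K := by
        rw [abs_of_nonneg (by linarith)]
        have := min_le_right (aS / K) ((c - F p) / K)
        linarith
      have hd : threadDist lS aS (F p) (F t) ≤ K * |p - t| := hlip' p hpT t htE.1
      have e1 : K * |p - t| < aS := by
        calc K * |p - t| < K * (aS / K) := mul_lt_mul_of_pos_left h1 hK0
          _ = aS := by field_simp
      have e2 : K * |p - t| < c - F p := by
        calc K * |p - t| < K * ((c - F p) / K) := mul_lt_mul_of_pos_left h2 hK0
          _ = c - F p := by field_simp
      have := habs0 p hpT t htE.1 (lt_of_le_of_lt hd e1)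
      have h3 : c - F p ≤ |F p - F t| := by
        have := htE.2.2.2
        have h4 : c - F p ≤ F t - F p := by linarith
        calc c - F p ≤ F t - F p := h4
          _ ≤ |F t - F p| := le_abs_self _
          _ = |F p - F t| := abs_sub_comm _ _
      linarith
    have hpv' : p < v := lt_of_le_of_ne hpv (fun h => by rw [h] at hFp; linarith)
    obtain ⟨q, hqT, hpq, hqv, hqa⟩ := hstep p hpT v hv hpv'
    have hcq : F q < c := by
      by_contra hc
      push_neg at hc
      have : q ∈ E := ⟨hqT, le_trans hup (le_of_lt hpq), hqv, hc⟩
      exact absurd (le_csSup hbdd this) (not_le.mpr hpq)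
    refine ⟨q, hqT, le_trans hup (le_of_lt hpq), hqv, ?_, hcq⟩
    have : F p - F q ≤ |F q - F p| := by
      calc F p - F q ≤ |F p - F q| := le_abs_self _
        _ = |F q - F p| := abs_sub_comm _ _
    linarith
  -- facts about the new width a'
  set a' := threadDist lS aS A B with ha'
  have ha'0 : 0 ≤ a' := by
    rw [ha']
    simp only [threadDist]
    exact le_min (abs_nonneg _) (le_min (by linarith) (by linarith))
  have ha'L : a' ≤ B - A := by
    rw [ha']
    calc threadDist lS aS A B ≤ |A - B| := threadDist_le_abs _ _ _ _
      _ = B - A := by rw [abs_sub_comm, abs_of_nonneg (by linarith)]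
  have ha'w : a' ≤ A + (lS - B) + aS := by
    rw [ha']
    simp only [threadDist]
    exact le_trans (min_le_right _ _) (min_le_left _ _)
  have ha'aT : a' ≤ K * aT := by
    have h1 := hFlip 0 hT0 lT hTl
    rw [hF0, hFl] at h1
    have h2 : threadDist lT aT 0 lT ≤ aT := by
      simp only [threadDist]
      refine le_trans (min_le_right _ _) (le_trans (min_le_left _ _) (by linarith))
    rw [ha']
    exact le_trans h1 (mul_le_mul_of_nonneg_left h2 (le_of_lt hK0))
  -- lower bound for threadDist in the "short" regime
  have hdlow : ∀ u v : ℝ, 0 ≤ u → v ≤ lS → 2 * (v - u) < lS + aS →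
      v - u ≤ threadDist lS aS u v := by
    intro u v hu hv h
    simp only [threadDist]
    refine le_min ?_ (le_min (by linarith) (by linarith))
    calc v - u ≤ |v - u| := le_abs_self _
      _ = |u - v| := abs_sub_comm _ _
  -- Claim (i), version for x ≤ y
  have hCaux : ∀ x, x ∈ T → ∀ y, y ∈ T → x ≤ y →
      threadDist (B - A) a' (G x - A) (G y - A) ≤ K * (y - x) := by
    intro x hx y hy hxy
    have hFx := hFb x hx
    have hFy := hFb y hy
    have hGx := hGrange x
    have hGy := hGrange y
    by_cases h1 : |F x - F y| ≤ K * (y - x)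
    · calc threadDist (B - A) a' (G x - A) (G y - A) ≤ |(G x - A) - (G y - A)| :=
            threadDist_le_abs _ _ _ _
        _ = |G x - G y| := by ring_nf
        _ ≤ |F x - F y| := hGlip x y
        _ ≤ K * (y - x) := h1
    · push_neg at h1
      have hδd : threadDist lS aS (F x) (F y) ≤ K * (y - x) := by
        have := hlip' x hx y hy
        rw [abs_sub_comm, abs_of_nonneg (by linarith)] at this
        exact this
      have hw : lS + aS - |F x - F y| ≤ K * (y - x) := by
        simp only [threadDist] at hδd
        rcases min_le_iff.mp hδd with h | h
        · linarith
        · rcases min_le_iff.mp h with h | h <;>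
            linarith [le_abs_self (F x - F y), neg_abs_le (F x - F y)]
      by_cases h2 : lS + aS ≤ 2 * (K * (y - x))
      · have hsum : (B - A) + a' ≤ lS + aS := by linarith
        simp only [threadDist]
        rcases le_total (G x) (G y) with hg | hg
        · rcases le_total (G y - G x) (K * (y - x)) with h3 | h3
          · refine min_le_iff.mpr (Or.inl ?_)
            rw [abs_of_nonpos (by linarith)]
            linarith
          · exact min_le_iff.mpr (Or.inr (min_le_iff.mpr (Or.inl (by linarith))))
        · rcases le_total (G x - G y) (K * (y - x)) with h3 | h3
          · refine min_le_iff.mpr (Or.inl ?_)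
            rw [abs_of_nonneg (by linarith)]
            linarith
          · exact min_le_iff.mpr (Or.inr (min_le_iff.mpr (Or.inr (by linarith))))
      · push_neg at h2
        exfalso
        have hFxy : lS + aS - (K * (y - x)) ≤ |F x - F y| := by linarith
        rcases le_total (F x) (F y) with hF | hF
        · have habs1 : |F x - F y| = F y - F x := by
            rw [abs_sub_comm, abs_of_nonneg (by linarith)]
          rw [habs1] at hFxy h1
          have hbig : (lS + aS) / 2 < F y - F x := by linarith
          set c := (F x + F y - aS) / 2 with hc
          have hc1 : F x ≤ c := by
            have : aS ≤ (lS + aS) / 2 := by linarith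
            rw [hc]; linarith
          have hc2 : c < F y := by rw [hc]; linarith
          obtain ⟨t, htT, hxt, hty, hct, hct2⟩ := hIVTup x hx y hy hxy c hc1 hc2
          have hFyx : F y - F x ≤ lS := by linarith
          have hb1 : 2 * (F t - F x) < lS + aS := by rw [hc] at hct2; linarith
          have hb2 : 2 * (F y - F t) < lS + aS := by rw [hc] at hct; linarith
          have hp1 : F t - F x ≤ threadDist lS aS (F x) (F t) :=
            hdlow (F x) (F t) hFx.1 (hFb t htT).2 hb1
          have hp2 : F y - F t ≤ threadDist lS aS (F t) (F y) :=
            hdlow (F t) (F y) (hFb t htT).1 hFy.2 hb2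
          have hq1 : threadDist lS aS (F x) (F t) ≤ K * (t - x) := by
            have := hlip' x hx t htT
            rw [abs_sub_comm, abs_of_nonneg (by linarith)] at this
            exact this
          have hq2 : threadDist lS aS (F t) (F y) ≤ K * (y - t) := by
            have := hlip' t htT y hy
            rw [abs_sub_comm, abs_of_nonneg (by linarith)] at this
            exact this
          have hsumK : K * (t - x) + K * (y - t) = K * (y - x) := by ring
          linarith
        · have habs1 : |F x - F y| = F x - F y := abs_of_nonneg (by linarith)
          rw [habs1] at hFxy h1
          have hbig : (lS + aS) / 2 < F x - F y := by linarith
          set c := (F x + F y + aS) / 2 with hc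
          have hc1 : c ≤ F x := by
            have : aS ≤ (lS + aS) / 2 := by linarith
            rw [hc]; linarith
          have hc2 : F y < c := by rw [hc]; linarith
          obtain ⟨t, htT, hxt, hty, hct, hct2⟩ := hIVTdown x hx y hy hxy c hc1 hc2
          have hFxy' : F x - F y ≤ lS := by linarith
          have hb1 : 2 * (F x - F t) < lS + aS := by rw [hc] at hct; linarith
          have hb2 : 2 * (F t - F y) < lS + aS := by rw [hc] at hct2; linarith
          have hp1 : F x - F t ≤ threadDist lS aS (F t) (F x) :=
            hdlow (F t) (F x) (hFb t htT).1 hFx.2 hb1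
          have hp2 : F t - F y ≤ threadDist lS aS (F y) (F t) :=
            hdlow (F y) (F t) hFy.1 (hFb t htT).2 hb2
          have hq1 : threadDist lS aS (F t) (F x) ≤ K * (t - x) := by
            have := hlip' x hx t htT
            rw [abs_sub_comm, abs_of_nonneg (by linarith)] at this
            rw [threadDist_symm]
            exact this
          have hq2 : threadDist lS aS (F y) (F t) ≤ K * (y - t) := by
            have := hlip' t htT y hy
            rw [abs_sub_comm, abs_of_nonneg (by linarith)] at this
            rw [threadDist_symm]
            exact this
          have hsumK : K * (t - x) + K * (y - t) = K * (y - x) := by ring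
          linarith
  -- Claim (i)
  have hCi : ∀ x ∈ T, ∀ y ∈ T,
      threadDist (B - A) a' (G x - A) (G y - A) ≤ K * |x - y| := by
    intro x hx y hy
    rcases le_total x y with h | h
    · rw [abs_sub_comm, abs_of_nonneg (by linarith)]
      exact hCaux x hx y hy h
    · rw [abs_of_nonneg (by linarith), threadDist_symm]
      exact hCaux y hy x hx h
  -- wrap bound
  have hwrapb : ∀ x ∈ T, ∀ y ∈ T,
      threadDist (B - A) a' (G x - A) (G y - A) ≤ K * (x + (lT - y) + aT) := by
    intro x hx y hy
    have hGx := hGrange x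
    have hGy := hGrange y
    have hx0 : (0:ℝ) ≤ x := (hTb x hx).1
    have hyl : y ≤ lT := (hTb y hy).2
    have hxa : threadDist (B - A) a' (G x - A) (G 0 - A) ≤ K * x := by
      have := hCi x hx 0 hT0
      rwa [sub_zero, abs_of_nonneg hx0] at this
    rw [hG0, sub_self] at hxa
    have hyb : threadDist (B - A) a' (G lT - A) (G y - A) ≤ K * (lT - y) := by
      have := hCi lT hTl y hy
      rwa [abs_of_nonneg (by linarith)] at this
    rw [hGl] at hyb
    -- extract branches
    have hx' : (G x - A) ≤ K * x ∨ (B - A) - (G x - A) + a' ≤ K * x := by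
      simp only [threadDist] at hxa
      rcases min_le_iff.mp hxa with h | h
      · left
        rw [sub_zero, abs_of_nonneg (by linarith)] at h
        exact h
      · rcases min_le_iff.mp h with h | h
        · left; linarith
        · right; linarith
    have hy' : (B - G y) ≤ K * (lT - y) ∨ (G y - A) + a' ≤ K * (lT - y) := by
      simp only [threadDist] at hyb
      rcases min_le_iff.mp hyb with h | h
      · left
        rw [abs_of_nonneg (by linarith)] at h
        linarith
      · rcases min_le_iff.mp h with h | h
        · left; linarith
        · right; linarith
    simp only [threadDist]
    have haT' : a' ≤ K * aT := ha'aT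
    rcases hx' with h1 | h1 <;> rcases hy' with h2 | h2
    · exact min_le_iff.mpr (Or.inr (min_le_iff.mpr (Or.inl (by linarith))))
    · refine min_le_iff.mpr (Or.inl ?_)
      rcases le_total (G x) (G y) with h3 | h3
      · rw [abs_of_nonpos (by linarith)]; linarith
      · rw [abs_of_nonneg (by linarith)]; linarith
    · refine min_le_iff.mpr (Or.inl ?_)
      rcases le_total (G x) (G y) with h3 | h3
      · rw [abs_of_nonpos (by linarith)]; linarith
      · rw [abs_of_nonneg (by linarith)]; linarith
    · exact min_le_iff.mpr (Or.inr (min_le_iff.mpr (Or.inr (by linarith))))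
  constructor
  · intro x hx
    exact ⟨⟨(hGrange x).1, (hGrange x).2⟩, hGmem x hx⟩
  · intro x hx y hy
    have h1 := hCi x hx y hy
    have h2 := hwrapb x hx y hy
    have h3 : threadDist (B - A) a' (G x - A) (G y - A) ≤ K * (y + (lT - x) + aT) := by
      rw [threadDist_symm]
      exact hwrapb y hy x hx
    show threadDist (B - A) a' (G x - A) (G y - A) ≤ K * threadDist lT aT x y
    simp only [threadDist]
    rcases min_cases (x + (lT - y) + aT) (y + (lT - x) + aT) with ⟨h4, _⟩ | ⟨h4, _⟩ <;>
      rw [h4] <;>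
      rcases min_cases |x - y| _ with ⟨h5, _⟩ | ⟨h5, _⟩ <;> rw [h5]
    · exact h1
    · exact h2
    · exact h1
    · exact h3
end

section
/- Let T and S be threads of lengths l_T, l_S respectively, and let F : T → S be a non-decreasing Lipschitz function with F(0) = 0 and F(l_T) = l_S. Then for every gap (p_S, q_S) of S there exists a gap (x, y) of T such that F(x) ≤ p_S and F(y) ≥ q_S (i.e., the gap of T jumps over the gap of S with respect to F). -/
open Set

/-- for a non-decreasing Lipschitz `F : T → S` fixing the extremes,
every gap of `S` is jumped over by some gap of `T`. -/
theorem gap_jumps_over_gap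
    (lT aT lS aS : ℝ) (haT : 0 < aT) (haTl : aT ≤ lT) (haS : 0 < aS) (haSl : aS ≤ lS)
    (T S : Set ℝ) (hT : IsThread T lT) (hS : IsThread S lS)
    (K : ℝ) (F : ℝ → ℝ) (hFmap : Set.MapsTo F T S)
    (hmono : ∀ x ∈ T, ∀ y ∈ T, x ≤ y → F x ≤ F y)
    (hFlip : ∀ x ∈ T, ∀ y ∈ T, threadDist lS aS (F x) (F y) ≤ K * threadDist lT aT x y)
    (hF0 : F 0 = 0) (hFl : F lT = lS) :
    ∀ pS qS : ℝ, IsGap S pS qS →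
      ∃ x y : ℝ, IsGap T x y ∧ F x ≤ pS ∧ qS ≤ F y := by
  rintro pS qS ⟨hpS, hqS, hpq, hgapS⟩
  obtain ⟨hTclosed, hTsub, h0T, hlT⟩ := hT
  obtain ⟨hSclosed, hSsub, h0S, hlS⟩ := hS
  -- K is nonnegative
  have hdT : threadDist lT aT 0 lT = aT := by
    unfold threadDist
    rw [zero_sub, abs_neg, abs_of_nonneg (by linarith : (0:ℝ) ≤ lT),
      show (0:ℝ) + (lT - lT) + aT = aT by ring,
      show lT + (lT - 0) + aT = 2*lT + aT by ring,
      show min aT (2*lT+aT) = aT from min_eq_left (by linarith),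
      min_eq_right (by linarith : aT ≤ lT)]
  have hdS : threadDist lS aS 0 lS = aS := by
    unfold threadDist
    rw [zero_sub, abs_neg, abs_of_nonneg (by linarith : (0:ℝ) ≤ lS),
      show (0:ℝ) + (lS - lS) + aS = aS by ring,
      show lS + (lS - 0) + aS = 2*lS + aS by ring,
      show min aS (2*lS+aS) = aS from min_eq_left (by linarith),
      min_eq_right (by linarith : aS ≤ lS)]
  have hKaT : aS ≤ K * aT := by
    have := hFlip 0 h0T lT hlT
    rwa [hF0, hFl, hdT, hdS] at this
  have hK : 0 ≤ K := by nlinarith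
  -- the key continuity estimate
  have key : ∀ u ∈ T, ∀ v ∈ T, min |F u - F v| aS ≤ K * |u - v| := by
    intro u hu v hv
    have huS := hSsub (hFmap hu)
    have hvS := hSsub (hFmap hv)
    have h1 : min |F u - F v| aS ≤ threadDist lS aS (F u) (F v) := by
      unfold threadDist
      refine le_min (min_le_left _ _) (le_min ?_ ?_) <;>
        · refine le_trans (min_le_right _ _) ?_
          obtain ⟨hu1, hu2⟩ := huS
          obtain ⟨hv1, hv2⟩ := hvS
          linarith
    have h2 : threadDist lT aT u v ≤ |u - v| := min_le_left _ _
    calc min |F u - F v| aS ≤ threadDist lS aS (F u) (F v) := h1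
      _ ≤ K * threadDist lT aT u v := hFlip u hu v hv
      _ ≤ K * |u - v| := mul_le_mul_of_nonneg_left h2 hK
  have hpS0 : 0 ≤ pS := (hSsub hpS).1
  have hqSl : qS ≤ lS := (hSsub hqS).2
  set A : Set ℝ := {t | t ∈ T ∧ F t ≤ pS} with hAdef
  set B : Set ℝ := {t | t ∈ T ∧ qS ≤ F t} with hBdef
  have h0A : (0:ℝ) ∈ A := ⟨h0T, by rw [hF0]; exact hpS0⟩
  have hlB : lT ∈ B := ⟨hlT, by rw [hFl]; exact hqSl⟩
  have hAbdd : BddAbove A := ⟨lT, fun t ht => (hTsub ht.1).2⟩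
  have hBbdd : BddBelow B := ⟨0, fun t ht => (hTsub ht.1).1⟩
  set x := sSup A with hxdef
  set y := sInf B with hydef
  have hxT : x ∈ T := by
    have h1 : x ∈ closure A := csSup_mem_closure ⟨0, h0A⟩ hAbdd
    exact (IsClosed.closure_subset_iff hTclosed).2 (fun t ht => ht.1) h1
  have hyT : y ∈ T := by
    have h1 : y ∈ closure B := csInf_mem_closure ⟨lT, hlB⟩ hBbdd
    exact (IsClosed.closure_subset_iff hTclosed).2 (fun t ht => ht.1) h1
  have hFx : F x ≤ pS := by
    by_contra h
    push_neg at h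
    set c := min (F x - pS) aS with hcdef
    have hc : 0 < c := lt_min (by linarith) haS
    have hδ : 0 < c / (K + 1) := by positivity
    obtain ⟨a, haA, hax⟩ := exists_lt_of_lt_csSup ⟨0, h0A⟩
      (show x - c / (K + 1) < x by linarith)
    have hax2 : a ≤ x := le_csSup hAbdd haA
    have h1 : min |F a - F x| aS ≤ K * |a - x| := key a haA.1 x hxT
    have habs : |a - x| < c / (K + 1) := by
      rw [abs_of_nonpos (by linarith)]; linarith
    have h2 : K * |a - x| < c := by
      have : K * |a - x| ≤ K * (c / (K + 1)) :=
        mul_le_mul_of_nonneg_left habs.le hK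
      have h3 : K * (c / (K + 1)) < c := by
        rw [mul_div_assoc', div_lt_iff₀ (by linarith : (0:ℝ) < K + 1)]
        nlinarith
      linarith
    have h4 : |F a - F x| < c := by
      rcases min_lt_iff.1 (lt_of_le_of_lt h1 h2) with h5 | h5
      · exact h5
      · exact absurd h5 (not_lt.2 (min_le_right _ _))
    have h6 : F x - F a ≤ |F a - F x| := by
      rw [abs_sub_comm]; exact le_abs_self _
    have h7 : c ≤ F x - pS := min_le_left _ _
    have := haA.2
    linarith
  have hFy : qS ≤ F y := by
    by_contra h
    push_neg at h
    set c := min (qS - F y) aS with hcdef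
    have hc : 0 < c := lt_min (by linarith) haS
    have hδ : 0 < c / (K + 1) := by positivity
    obtain ⟨b, hbB, hby⟩ := exists_lt_of_csInf_lt ⟨lT, hlB⟩
      (show y < y + c / (K + 1) by linarith)
    have hby2 : y ≤ b := csInf_le hBbdd hbB
    have h1 : min |F b - F y| aS ≤ K * |b - y| := key b hbB.1 y hyT
    have habs : |b - y| < c / (K + 1) := by
      rw [abs_of_nonneg (by linarith)]; linarith
    have h2 : K * |b - y| < c := by
      have : K * |b - y| ≤ K * (c / (K + 1)) :=
        mul_le_mul_of_nonneg_left habs.le hK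
      have h3 : K * (c / (K + 1)) < c := by
        rw [mul_div_assoc', div_lt_iff₀ (by linarith : (0:ℝ) < K + 1)]
        nlinarith
      linarith
    have h4 : |F b - F y| < c := by
      rcases min_lt_iff.1 (lt_of_le_of_lt h1 h2) with h5 | h5
      · exact h5
      · exact absurd h5 (not_lt.2 (min_le_right _ _))
    have h6 : F b - F y ≤ |F b - F y| := le_abs_self _
    have h7 : c ≤ qS - F y := min_le_left _ _
    have := hbB.2
    linarith
  have hxy : x < y := by
    by_contra h
    push_neg at h
    have := hmono y hyT x hxT h
    linarith
  refine ⟨x, y, ⟨hxT, hyT, hxy, ?_⟩, hFx, hFy⟩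
  ext t
  simp only [mem_inter_iff, mem_Ioo, mem_empty_iff_false, iff_false, not_and]
  rintro ⟨htx, hty⟩ htT
  have hFtS : F t ∈ S := hFmap htT
  rcases le_or_gt (F t) pS with h | h
  · exact absurd (le_csSup hAbdd ⟨htT, h⟩) (not_le.2 htx)
  rcases le_or_gt qS (F t) with h' | h'
  · exact absurd (csInf_le hBbdd ⟨htT, h'⟩) (not_le.2 hty)
  have : F t ∈ Set.Ioo pS qS ∩ S := ⟨⟨h, h'⟩, hFtS⟩
  rw [hgapS] at this
  exact this
end

section
/- Let K > 1, and let T and S be threads where S has width a_S. Let F : T → S be a non-decreasing K-Lipschitz function with F(0) = 0 and F(l_T) = l_S. Let C = (p,q) be a gap of T with q − p < a_S/K, and let (x_1,y_1),...,(x_k,y_k) be finitely many distinct gaps of S such that C jumps over each (x_j,y_j) with respect to F. Then K·(q − p) ≥ max over j ≠ j' of |y_j − x_{j'}|. -/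
open Set

/-- if a small gap `(p, q)` of `T` jumps over finitely many distinct
gaps `(x_j, y_j)` of `S` with respect to a non-decreasing `K`-Lipschitz `F`,
then `K (q - p) ≥ |y_j - x_{j'}|` for all `j ≠ j'`. -/
theorem only_long_gaps_can_jump
    (lT aT lS aS : ℝ) (haT : 0 < aT) (haTl : aT ≤ lT) (haS : 0 < aS) (haSl : aS ≤ lS)
    (T S : Set ℝ) (hT : IsThread T lT) (hS : IsThread S lS)
    (K : ℝ) (hK : 1 < K)
    (F : ℝ → ℝ) (hFmap : Set.MapsTo F T S)
    (hmono : ∀ x ∈ T, ∀ y ∈ T, x ≤ y → F x ≤ F y)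
    (hFlip : ∀ x ∈ T, ∀ y ∈ T, threadDist lS aS (F x) (F y) ≤ K * threadDist lT aT x y)
    (hF0 : F 0 = 0) (hFl : F lT = lS)
    (p q : ℝ) (hpq : IsGap T p q) (hsmall : q - p < aS / K)
    (k : ℕ) (x y : Fin k → ℝ)
    (hgaps : ∀ j, IsGap S (x j) (y j))
    (hdistinct : ∀ j j', j ≠ j' → (x j, y j) ≠ (x j', y j'))
    (hjump : ∀ j, F p ≤ x j ∧ y j ≤ F q) :
    ∀ j j', j ≠ j' → |y j - x j'| ≤ K * (q - p) := by
  obtain ⟨hpT, hqT, hpltq, -⟩ := hpq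
  have hFpI := hS.2.1 (hFmap hpT)
  have hFqI := hS.2.1 (hFmap hqT)
  have hle : F p ≤ F q := hmono p hpT q hqT hpltq.le
  have hd : threadDist lT aT p q ≤ q - p := by
    refine le_trans (min_le_left _ _) ?_
    rw [abs_sub_comm, abs_of_nonneg (by linarith)]
  have hKpos : (0 : ℝ) < K := by linarith
  have hKqp : K * (q - p) < aS := by
    rw [lt_div_iff₀ hKpos] at hsmall; linarith [hsmall]
  have h1 : threadDist lS aS (F p) (F q) ≤ K * (q - p) :=
    le_trans (hFlip p hpT q hqT) (by nlinarith)
  have h2 : F q - F p ≤ K * (q - p) := by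
    unfold threadDist at h1
    have habs : |F p - F q| ≤ K * (q - p) := by
      rcases min_le_iff.mp h1 with h | h
      · exact h
      · exfalso
        rcases min_le_iff.mp h with h | h <;>
          [linarith [hFpI.1, hFqI.2]; linarith [hFqI.1, hFpI.2]]
    rwa [abs_sub_comm, abs_of_nonneg (by linarith)] at habs
  intro j j' _
  obtain ⟨h1j, h2j⟩ := hjump j
  obtain ⟨h1j', h2j'⟩ := hjump j'
  obtain ⟨-, -, hltj, -⟩ := hgaps j
  obtain ⟨-, -, hltj', -⟩ := hgaps j'
  rw [abs_le]
  constructor <;> linarith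
end

section
/- Let r > 0, let T and S be threads (S of width a_S), and let F : T → S be a non-decreasing K-Lipschitz map with F(0) = 0 and F(l_T) = l_S. Suppose a gap C of T has length less than a_S/K and jumps over two gaps C_1 = (x_1,y_1) and C_2 = (x_2,y_2) of S with respect to F, and suppose C_2 is not contained in the sweeping D_r(C_1) = (y_1 − r, x_1 + r). Then K·length(C) > r. -/
open Set

/-- if a small gap `C = (p,q)` of `T` jumps over two gaps
`C₁ = (x₁,y₁)` and `C₂ = (x₂,y₂)` of `S`, and `C₂` is not contained in the
sweeping `D_r(C₁) = (y₁ - r, x₁ + r)`, then `K · length(C) > r`. -/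
theorem sweeping_jump
    (lT aT lS aS : ℝ) (haT : 0 < aT) (haTl : aT ≤ lT) (haS : 0 < aS) (haSl : aS ≤ lS)
    (T S : Set ℝ) (hT : IsThread T lT) (hS : IsThread S lS)
    (r : ℝ) (hr : 0 < r) (K : ℝ)
    (F : ℝ → ℝ) (hFmap : Set.MapsTo F T S)
    (hmono : ∀ x ∈ T, ∀ y ∈ T, x ≤ y → F x ≤ F y)
    (hFlip : ∀ x ∈ T, ∀ y ∈ T, threadDist lS aS (F x) (F y) ≤ K * threadDist lT aT x y)
    (hF0 : F 0 = 0) (hFl : F lT = lS)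
    (p q : ℝ) (hpq : IsGap T p q) (hsmall : q - p < aS / K)
    (x₁ y₁ x₂ y₂ : ℝ) (hgap1 : IsGap S x₁ y₁) (hgap2 : IsGap S x₂ y₂)
    (hjump1 : F p ≤ x₁ ∧ y₁ ≤ F q) (hjump2 : F p ≤ x₂ ∧ y₂ ≤ F q)
    (hnsub : ¬ Set.Ioo x₂ y₂ ⊆ Set.Ioo (y₁ - r) (x₁ + r)) :
    r < K * (q - p) := by
  obtain ⟨hpT, hqT, hpltq, -⟩ := hpq
  have hK : 0 < K := by
    by_contra h
    push_neg at h
    rcases eq_or_lt_of_le h with h0 | h0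
    · rw [h0, div_zero] at hsmall; linarith
    · have := div_neg_of_pos_of_neg haS h0
      linarith
  obtain ⟨-, hTsub, h0T, hlT⟩ := hT
  have hp01 := hTsub hpT
  have hq01 := hTsub hqT
  simp only [Set.mem_Icc] at hp01 hq01
  have hFp0 : 0 ≤ F p := hF0 ▸ hmono 0 h0T p hpT hp01.1
  have hFql : F q ≤ lS := hFl ▸ hmono q hqT lT hlT hq01.2
  have hFpq : F p ≤ F q := hmono p hpT q hqT hpltq.le
  have hdT : threadDist lT aT p q ≤ q - p := by
    have habs : |p - q| = q - p := by
      rw [abs_sub_comm]; exact abs_of_nonneg (by linarith)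
    calc threadDist lT aT p q ≤ |p - q| := min_le_left _ _
      _ = q - p := habs
  have hKqp : K * (q - p) < aS := by
    have := (lt_div_iff₀ hK).mp hsmall
    linarith [this]
  have key : F q - F p ≤ K * (q - p) := by
    have h1 : threadDist lS aS (F p) (F q) ≤ K * (q - p) :=
      le_trans (hFlip p hpT q hqT) (by nlinarith)
    unfold threadDist at h1
    have habs : |F p - F q| = F q - F p := by
      rw [abs_sub_comm]; exact abs_of_nonneg (by linarith)
    rcases le_or_gt |F p - F q| (min (F p + (lS - F q) + aS) (F q + (lS - F p) + aS)) with h | h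
    · rw [min_eq_left h, habs] at h1; exact h1
    · exfalso
      rw [min_eq_right h.le] at h1
      have hw : aS ≤ min (F p + (lS - F q) + aS) (F q + (lS - F p) + aS) :=
        le_min (by linarith) (by linarith)
      linarith
  rw [Set.not_subset] at hnsub
  obtain ⟨t, ht, hnt⟩ := hnsub
  simp only [Set.mem_Ioo, not_and, not_lt] at ht hnt
  rcases le_or_gt t (y₁ - r) with hc | hc
  · -- y₁ - x₂ > r
    have : r < y₁ - x₂ := by linarith [ht.1]
    linarith [hjump2.1, hjump1.2, key]
  · have hx := hnt hc
    have : r < y₂ - x₁ := by linarith [ht.2]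
    linarith [hjump1.1, hjump2.2, key]
end

section
/- With notation as in the construction of T_γ (T_γ = [0,1] \ ∪_i G_i where the G_i are inductively chosen disjoint open intervals of lengths γ_i based at rational points): the set of gaps of T_γ (maximal open intervals of [0,1] disjoint from T_γ with endpoints in T_γ) is exactly {G_i : i ∈ ℕ}, and the length of G_i equals γ_i. -/
open Set

/-- Left endpoint of a nonempty open interval cannot lie in a disjoint open interval. -/
lemma aux_left {a b c d : ℝ} (hab : a < b) (hd : Disjoint (Set.Ioo a b) (Set.Ioo c d))
    (h : a ∈ Set.Ioo c d) : False := by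
  have h1 : a < min b d := lt_min hab h.2
  have ht1 : (a + min b d) / 2 ∈ Set.Ioo a b :=
    ⟨by linarith, by have := min_le_left b d; linarith⟩
  have ht2 : (a + min b d) / 2 ∈ Set.Ioo c d :=
    ⟨by have := h.1; linarith, by have := min_le_right b d; linarith⟩
  exact Set.disjoint_left.mp hd ht1 ht2

/-- Right endpoint of a nonempty open interval cannot lie in a disjoint open interval. -/
lemma aux_right {a b c d : ℝ} (hab : a < b) (hd : Disjoint (Set.Ioo a b) (Set.Ioo c d))
    (h : b ∈ Set.Ioo c d) : False := by
  have h1 : max a c < b := max_lt hab h.1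
  have ht1 : (max a c + b) / 2 ∈ Set.Ioo a b :=
    ⟨by have := le_max_left a c; linarith, by linarith⟩
  have ht2 : (max a c + b) / 2 ∈ Set.Ioo c d :=
    ⟨by have := le_max_right a c; linarith, by have := h.2; linarith⟩
  exact Set.disjoint_left.mp hd ht1 ht2

/-- the gaps of `T_γ` are exactly the intervals `Gᵢ`, and the
length of `Gᵢ` is `γᵢ`. -/
theorem Tgamma_gaps (q : ℕ → ℝ)
    (hq_mem : ∀ n, q n ∈ Set.Ioo (0 : ℝ) 1 ∧ ∃ r : ℚ, (r : ℝ) = q n)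
    (hq_inj : Function.Injective q)
    (hq_surj : ∀ r : ℚ, (r : ℝ) ∈ Set.Ioo (0 : ℝ) 1 → ∃ n, (r : ℝ) = q n)
    (γ : ℕ → ℝ) (hγpos : ∀ i, 0 < γ i) (hγdec : Antitone γ)
    (hγsmall : ∀ i, γ i < (2 : ℝ) ^ (-(i : ℤ) - 2))
    (hfirst : q 0 + γ 0 < 1)
    (n : ℕ → ℕ) (G : ℕ → Set ℝ)
    (hG : ∀ i, G i = Set.Ioo (q (n i)) (q (n i) + γ i))
    (hn0 : n 0 = 0)
    (hleast : ∀ i, 0 < i →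
      IsLeast {m | Set.Ioo (q m) (q m + γ i) ⊆
        Set.Ioo (0 : ℝ) 1 \ ⋃ j ∈ Finset.range i, G j} (n i)) :
    (∀ i, IsGap (Set.Icc (0 : ℝ) 1 \ ⋃ j, G j) (q (n i)) (q (n i) + γ i) ∧
        (q (n i) + γ i) - q (n i) = γ i) ∧
      (∀ x y : ℝ, IsGap (Set.Icc (0 : ℝ) 1 \ ⋃ j, G j) x y →
        ∃ i, Set.Ioo x y = G i) := by
  set T : Set ℝ := Set.Icc (0 : ℝ) 1 \ ⋃ j, G j with hT
  -- each G i avoids (0,1)ᶜ and the previous intervals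
  have hsub : ∀ i, G i ⊆ Set.Ioo (0 : ℝ) 1 \ ⋃ j ∈ Finset.range i, G j := by
    intro i
    rcases Nat.eq_zero_or_pos i with h0 | hpos
    · subst h0
      rw [hG 0, hn0]
      simp only [Finset.range_zero, Finset.notMem_empty, Set.iUnion_of_empty,
        Set.iUnion_empty, Set.diff_empty]
      intro x hx
      exact ⟨lt_trans (hq_mem 0).1.1 hx.1, lt_trans hx.2 hfirst⟩
    · rw [hG i]; exact (hleast i hpos).1
  have hdisj : ∀ i j, i ≠ j → Disjoint (G i) (G j) := by
    intro i j hij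
    rcases lt_or_gt_of_ne hij with h | h
    · exact Set.disjoint_right.mpr fun x hx hx' =>
        (hsub j hx).2 (Set.mem_biUnion (Finset.mem_range.mpr h) hx')
    · exact Set.disjoint_left.mpr fun x hx hx' =>
        (hsub i hx).2 (Set.mem_biUnion (Finset.mem_range.mpr h) hx')
  have hGIoo : ∀ i, G i ⊆ Set.Ioo (0 : ℝ) 1 := fun i x hx => (hsub i hx).1
  have hle : ∀ i, 0 ≤ q (n i) ∧ q (n i) + γ i ≤ 1 := by
    intro i
    have h : Set.Ioo (q (n i)) (q (n i) + γ i) ⊆ Set.Ioo (0 : ℝ) 1 := by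
      rw [← hG i]; exact hGIoo i
    rw [Set.Ioo_subset_Ioo_iff (by linarith [hγpos i])] at h
    exact h
  -- endpoints belong to T
  have hend : ∀ i, q (n i) ∈ T ∧ q (n i) + γ i ∈ T := by
    intro i
    have hγi := hγpos i
    have hqi := hle i
    constructor
    · refine ⟨⟨hqi.1, by linarith⟩, ?_⟩
      rw [Set.mem_iUnion]
      rintro ⟨j, hj⟩
      rcases eq_or_ne i j with rfl | hne
      · rw [hG i] at hj; exact lt_irrefl _ hj.1
      · have hd := hdisj i j hne
        rw [hG i, hG j] at hd
        rw [hG j] at hj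
        exact aux_left (by linarith) hd hj
    · refine ⟨⟨by linarith, hqi.2⟩, ?_⟩
      rw [Set.mem_iUnion]
      rintro ⟨j, hj⟩
      rcases eq_or_ne i j with rfl | hne
      · rw [hG i] at hj; exact lt_irrefl _ hj.2
      · have hd := hdisj i j hne
        rw [hG i, hG j] at hd
        rw [hG j] at hj
        exact aux_right (by linarith) hd hj
  have hGnotT : ∀ i, ∀ z ∈ G i, z ∉ T := by
    intro i z hz hzT
    exact hzT.2 (Set.mem_iUnion.mpr ⟨i, hz⟩)
  constructor
  · intro i
    refine ⟨⟨(hend i).1, (hend i).2, by linarith [hγpos i], ?_⟩, by ring⟩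
    rw [Set.eq_empty_iff_forall_notMem]
    rintro z ⟨hz1, hz2⟩
    exact hGnotT i z (show z ∈ G i by rw [hG i]; exact hz1) hz2
  · rintro x y ⟨hx, hy, hxy, hdis⟩
    have hdis' : ∀ z ∈ Set.Ioo x y, z ∉ T := by
      intro z hz hzT
      have : z ∈ Set.Ioo x y ∩ T := ⟨hz, hzT⟩
      rw [hdis] at this
      exact this
    have ht : (x + y) / 2 ∈ Set.Ioo x y := ⟨by linarith, by linarith⟩
    have htU : (x + y) / 2 ∈ ⋃ j, G j := by
      by_contra hc
      exact hdis' _ ht ⟨⟨by have := hx.1.1; linarith, by have := hy.1.2; linarith⟩, hc⟩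
    obtain ⟨i, hti⟩ := Set.mem_iUnion.mp htU
    refine ⟨i, ?_⟩
    rw [hG i] at hti ⊢
    obtain ⟨ht1, ht2⟩ := ht
    obtain ⟨hti1, hti2⟩ := hti
    have haT := (hend i).1
    have hbT := (hend i).2
    have hab : q (n i) < q (n i) + γ i := by have := hγpos i; linarith
    have hxG : x ∉ Set.Ioo (q (n i)) (q (n i) + γ i) := fun h => hGnotT i x (show x ∈ G i by rw [hG i]; exact h) hx
    have hyG : y ∉ Set.Ioo (q (n i)) (q (n i) + γ i) := fun h => hGnotT i y (show y ∈ G i by rw [hG i]; exact h) hy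
    have hxa : x ≤ q (n i) := by
      by_contra h
      push_neg at h
      exact hxG ⟨h, by linarith⟩
    have hby : q (n i) + γ i ≤ y := by
      by_contra h
      push_neg at h
      exact hyG ⟨by linarith, h⟩
    have hax : q (n i) ≤ x := by
      by_contra h
      push_neg at h
      exact hdis' (q (n i)) ⟨h, by linarith⟩ haT
    have hyb : y ≤ q (n i) + γ i := by
      by_contra h
      push_neg at h
      exact hdis' (q (n i) + γ i) ⟨by linarith, h⟩ hbT
    rw [le_antisymm hxa hax, le_antisymm hyb hby]
end
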